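/- arXiv:1004.5439 — 5 statements merged into one kernel-verified Lean document; each statement's English description precedes it below -/
import Mathlib

section
/- Let Q(t) ∈ ℤ[t] with Q mod 2 irreducible over ℤ/2. Then for X, Y ∈ ℤ[t], X² ≡ Y² (mod 8, Q) if and only if X ≡ Y (mod 4, Q) or X ≡ −Y (mod 4, Q). -/
open Polynomial

private lemma h2' : (Int.castRingHom (ZMod 2)) 2 = 0 := by decide

private lemma ker2 (p : Polynomial ℤ) :
    p.map (Int.castRingHom (ZMod 2)) = 0 ↔ ∃ q, p = C 2 * q := by
  constructor
  · intro h
    have : (C (2:ℤ)) ∣ p := by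
      rw [C_dvd_iff_dvd_coeff]
      intro n
      have := congrArg (fun r => r.coeff n) h
      simp [coeff_map] at this
      exact (ZMod.intCast_zmod_eq_zero_iff_dvd _ 2).1 this
    exact this
  · rintro ⟨q, rfl⟩
    rw [Polynomial.map_mul, map_C, h2', map_zero, zero_mul]

private lemma mem2 (Q Z : Polynomial ℤ) :
    Z ∈ Ideal.span ({C 2, Q} : Set (Polynomial ℤ)) ↔
      (Q.map (Int.castRingHom (ZMod 2))) ∣ Z.map (Int.castRingHom (ZMod 2)) := by
  rw [Ideal.mem_span_pair]
  constructor
  · rintro ⟨a, b, rfl⟩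
    refine ⟨b.map (Int.castRingHom (ZMod 2)), ?_⟩
    rw [Polynomial.map_add, Polynomial.map_mul, Polynomial.map_mul, map_C, h2',
      map_zero, mul_zero, zero_add, mul_comm]
  · rintro ⟨c, hc⟩
    obtain ⟨b, hb⟩ := Polynomial.map_surjective (Int.castRingHom (ZMod 2))
      (ZMod.intCast_surjective) c
    have h0 : (Z - b * Q).map (Int.castRingHom (ZMod 2)) = 0 := by
      rw [Polynomial.map_sub, Polynomial.map_mul, hb, hc]; ring
    obtain ⟨a, ha⟩ := (ker2 _).1 h0
    exact ⟨a, b, by linear_combination -ha⟩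

private lemma step (Q : Polynomial ℤ)
    (hirr : Irreducible (Q.map (Int.castRingHom (ZMod 2)))) (m : ℤ) (Z : Polynomial ℤ)
    (h : C 2 * Z ∈ Ideal.span ({C (2 * m), Q} : Set (Polynomial ℤ))) :
    Z ∈ Ideal.span ({C m, Q} : Set (Polynomial ℤ)) := by
  rw [Ideal.mem_span_pair] at h ⊢
  obtain ⟨a, b, hab⟩ := h
  have hb0 : b.map (Int.castRingHom (ZMod 2)) = 0 := by
    have := congrArg (Polynomial.map (Int.castRingHom (ZMod 2))) hab
    rw [Polynomial.map_add, Polynomial.map_mul, Polynomial.map_mul, Polynomial.map_mul,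
      map_C, map_C, h2', show (Int.castRingHom (ZMod 2)) (2 * m) = 0 by
        rw [map_mul, h2', zero_mul]] at this
    simp only [map_zero, mul_zero, zero_add, zero_mul] at this
    rcases mul_eq_zero.1 this with h | h
    · exact h
    · exact absurd h hirr.ne_zero
  obtain ⟨b', hb'⟩ := (ker2 _).1 hb0
  refine ⟨a, b', ?_⟩
  have key : C 2 * (a * C m + b' * Q) = C 2 * Z := by
    rw [← hab, hb']
    push_cast [map_mul]
    ring
  exact mul_left_cancel₀ (by simp : (C (2:ℤ)) ≠ 0) key

theorem stmt2 (Q X Y : Polynomial ℤ)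
    (hirr : Irreducible (Q.map (Int.castRingHom (ZMod 2)))) :
    X ^ 2 - Y ^ 2 ∈ Ideal.span ({C 8, Q} : Set (Polynomial ℤ)) ↔
      (X - Y ∈ Ideal.span ({C 4, Q} : Set (Polynomial ℤ)) ∨
       X + Y ∈ Ideal.span ({C 4, Q} : Set (Polynomial ℤ))) := by
  set φ := Int.castRingHom (ZMod 2) with hφ
  have hprime : Prime (Q.map φ) := hirr.prime
  have htwo : (2 : Polynomial (ZMod 2)) = 0 := CharTwo.two_eq_zero
  constructor
  · intro h
    obtain ⟨a, b, hab⟩ := Ideal.mem_span_pair.1 h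
    have h1 : X - Y ∈ Ideal.span ({C 2, Q} : Set (Polynomial ℤ)) := by
      rw [mem2]
      have hdvd : (Q.map φ) ∣ ((X - Y).map φ) * ((X - Y).map φ) := by
        refine ⟨b.map φ, ?_⟩
        have h8 := congrArg (Polynomial.map φ) hab
        rw [Polynomial.map_add, Polynomial.map_mul, Polynomial.map_mul, map_C,
          show φ 8 = 0 by decide, map_zero, mul_zero, zero_add,
          Polynomial.map_sub, Polynomial.map_pow, Polynomial.map_pow] at h8
        rw [Polynomial.map_sub]
        linear_combination h8 +
          (X.map φ ^ 2 - X.map φ * Y.map φ - Q.map φ * b.map φ) * htwo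
      exact hprime.dvd_of_dvd_pow (n := 2) (by rwa [sq])
    obtain ⟨A, B, hAB⟩ := Ideal.mem_span_pair.1 h1
    have h4 : C (2:ℤ) * (C 2 * (A * (A + Y))) ∈
        Ideal.span ({C (2 * 4 : ℤ), Q} : Set (Polynomial ℤ)) := by
      rw [Ideal.mem_span_pair]
      refine ⟨a, b - (A * B * C 4 + Q * B ^ 2 + C 2 * Y * B), ?_⟩
      have hX : X = C 2 * A + Q * B + Y := by
        simp only [map_ofNat] at hAB ⊢
        linear_combination -hAB
      rw [hX] at hab
      simp only [map_ofNat, map_mul] at hab ⊢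
      linear_combination hab
    have h5 := step Q hirr 2 _ (step Q hirr 4 _ h4)
    rw [mem2, Polynomial.map_mul] at h5
    rcases hprime.2.2 _ _ h5 with hc | hc
    · left
      rw [← mem2, Ideal.mem_span_pair] at hc
      obtain ⟨c, d, hcd⟩ := hc
      rw [Ideal.mem_span_pair]
      refine ⟨c, C 2 * d + B, ?_⟩
      simp only [map_ofNat] at hAB hcd ⊢
      linear_combination hAB + 2 * hcd
    · right
      rw [← mem2, Ideal.mem_span_pair] at hc
      obtain ⟨c, d, hcd⟩ := hc
      rw [Ideal.mem_span_pair]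
      refine ⟨c, C 2 * d + B, ?_⟩
      simp only [map_ofNat] at hAB hcd ⊢
      linear_combination hAB + 2 * hcd
  · rintro (h | h) <;> obtain ⟨a, b, hab⟩ := Ideal.mem_span_pair.1 h <;>
      rw [Ideal.mem_span_pair]
    · refine ⟨2 * a ^ 2 + a * Y, C 8 * a * b + b ^ 2 * Q + C 2 * Y * b, ?_⟩
      have hX : X = a * C 4 + b * Q + Y := by
        simp only [map_ofNat] at hab ⊢; linear_combination -hab
      rw [hX]
      simp only [map_ofNat]
      ring
    · refine ⟨2 * a ^ 2 - a * Y, C 8 * a * b + b ^ 2 * Q - C 2 * Y * b, ?_⟩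
      have hX : X = a * C 4 + b * Q - Y := by
        simp only [map_ofNat] at hab ⊢; linear_combination -hab
      rw [hX]
      simp only [map_ofNat]
      ring
end

section
/- Let Q(t) ∈ ℤ[t] be monic of degree r with Q mod 2 irreducible over ℤ/2 and odd constant coefficient, and let λ be the multiplicative order of t in (ℤ/2)[t]/(Q). Then t^λ ≡ −1 (mod 4, Q) if and only if Q(t) satisfies Condition S. -/
open Polynomial

/-- Condition S: `Q(t)² + Q(−t)² ≡ 2·q_r·Q(t²) (mod 8)` where `q_r` is the leading
coefficient of `Q`. -/
def conditionS (Q : Polynomial ℤ) : Prop :=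
  (Q ^ 2 + (Q.comp (-X)) ^ 2).map (Int.castRingHom (ZMod 8)) =
    (C (2 * Q.leadingCoeff) * Q.comp (X ^ 2)).map (Int.castRingHom (ZMod 8))

/-!
Work in `R = ℤ[t]/(4, Q)`. Its reduction mod 2 is the field `K = 𝔽₂[t]/(Q̄)` with `2^r`
elements, and the kernel `2R` of the reduction squares to zero. Write `Q = E(t²) + t·O(t²)` and
put `G = E² − x·O²`, `F = E² + x·O²` (`graeffe Q` and `graeffePlus Q`), so that
`G(t²) = Q(t)·Q(−t)` and `2·F(t²) = Q(t)² + Q(−t)²`.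

Condition S says `F ≡ Q (mod 4)`. Since `F ≡ Q (mod 2)` and `deg (F − Q) < r`, this is
equivalent to `F(t) = 0` in `R`.

Put `T = t^(2^r)`. Each factor of `G(T) = Q(t^(2^(r-1)))·Q(−t^(2^(r-1)))` lies in `2R`, so
`G(T) = 0`. A square `a²` in `R` depends only on `a mod 2`, hence `F(−T) = G(T) = 0`. In `K` we
have `t^λ = 1` and `2^r = λm + 1` with `m` odd, so `−T = −t·t^λ ≡ t (mod 2)`, and `−T = t`
exactly when `t^λ = −1`. Finally `F'(t) ≡ Q'(t)` is a unit because `Q̄` is separable. As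
`(−T − t)² = 0`, Taylor expansion shows that the root `−T` of `F` equals `t` iff `F(t) = 0`.
-/

namespace Polynomial

variable {R : Type*} [CommRing R]

theorem expand_contract_add_X_mul_expand_contract_divX (p : R[X]) :
    expand R 2 (contract 2 p) + X * expand R 2 (contract 2 p.divX) = p := by
  ext n
  rcases Nat.even_or_odd' n with ⟨k, rfl | rfl⟩
  · rcases k with _ | k
    · simp [coeff_expand, coeff_contract]
    · rw [show 2 * (k + 1) = (2 * k + 1) + 1 by ring]
      simp [coeff_expand, coeff_contract, coeff_X_mul, Nat.dvd_add_right, mul_comm]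
      congr 1; omega
  · simp [coeff_expand, coeff_contract, coeff_X_mul, mul_comm]

theorem expand_two_comp_neg_X (p : R[X]) : (expand R 2 p).comp (-X) = expand R 2 p := by
  rw [expand_eq_comp_X_pow, comp_assoc, pow_comp, X_comp, neg_sq]

theorem comp_neg_X_eq_expand_contract_sub (p : R[X]) :
    p.comp (-X) = expand R 2 (contract 2 p) - X * expand R 2 (contract 2 p.divX) := by
  conv_lhs => rw [← expand_contract_add_X_mul_expand_contract_divX p]
  rw [add_comp, mul_comp, X_comp, expand_two_comp_neg_X, expand_two_comp_neg_X, neg_mul,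
    sub_eq_add_neg]

/-- The Graeffe root-squaring transform (up to the sign `(-1)^deg p`). -/
noncomputable def graeffe (p : R[X]) : R[X] :=
  contract 2 p ^ 2 - X * contract 2 p.divX ^ 2

noncomputable def graeffePlus (p : R[X]) : R[X] :=
  contract 2 p ^ 2 + X * contract 2 p.divX ^ 2

theorem expand_graeffe (p : R[X]) : expand R 2 (graeffe p) = p * p.comp (-X) := by
  have hp := expand_contract_add_X_mul_expand_contract_divX p
  rw [comp_neg_X_eq_expand_contract_sub]
  simp only [graeffe, map_sub, map_mul, map_pow, expand_X]
  linear_combination (expand R 2 (contract 2 p) - X * expand R 2 (contract 2 p.divX)) * hp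

theorem two_mul_expand_graeffePlus (p : R[X]) :
    2 * expand R 2 (graeffePlus p) = p ^ 2 + p.comp (-X) ^ 2 := by
  have hp := expand_contract_add_X_mul_expand_contract_divX p
  rw [comp_neg_X_eq_expand_contract_sub]
  simp only [graeffePlus, map_add, map_mul, map_pow, expand_X]
  linear_combination (expand R 2 (contract 2 p) + X * expand R 2 (contract 2 p.divX) + p) * hp

theorem map_graeffePlus_zmod_two (p : ℤ[X]) :
    (graeffePlus p).map (Int.castRingHom (ZMod 2)) = p.map (Int.castRingHom (ZMod 2)) := by
  conv_rhs => rw [← expand_contract_add_X_mul_expand_contract_divX p]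
  simp only [graeffePlus, Polynomial.map_add, Polynomial.map_mul, Polynomial.map_pow, map_X,
    map_expand, ZMod.expand_card]

theorem Monic.natDegree_sub_lt [Nontrivial R] {p q : R[X]} (hp : p.Monic) (hq : q.Monic)
    (hpq : p.natDegree = q.natDegree) (hp0 : p.natDegree ≠ 0) :
    (p - q).natDegree < p.natDegree := by
  by_cases h : p - q = 0
  · rw [h, natDegree_zero]; omega
  rw [natDegree_lt_iff_degree_lt h, ← degree_eq_natDegree hp.ne_zero]
  refine degree_sub_lt_left ?_ hp.ne_zero (hp.leadingCoeff.trans hq.leadingCoeff.symm)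
  rw [degree_eq_natDegree hp.ne_zero, degree_eq_natDegree hq.ne_zero, hpq]

theorem natDegree_graeffePlus_sub_lt [IsDomain R] (h2 : (2 : R) ≠ 0) {Q : R[X]} (hQ : Q.Monic)
    (h0 : Q.natDegree ≠ 0) : (graeffePlus Q - Q).natDegree < Q.natDegree := by
  have hsq : (Q ^ 2).natDegree = Q.natDegree * 2 := by rw [hQ.natDegree_pow, mul_comm]
  have hneg : (Q.comp (-X) ^ 2).Monic := by
    simp [Monic, leadingCoeff_comp, hQ.leadingCoeff, leadingCoeff_X, ← pow_mul]
  have hnegdeg : (Q.comp (-X) ^ 2).natDegree = Q.natDegree * 2 := by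
    simp [natDegree_comp, mul_comm]
  have hexp := natDegree_expand 2 Q
  have hsub := (hQ.pow 2).natDegree_sub_lt (hQ.expand two_pos) (hsq.trans hexp.symm) (by omega)
  have hnegsub := hneg.natDegree_sub_lt (hQ.expand two_pos) (hnegdeg.trans hexp.symm) (by omega)
  -- the leading terms of `Q(X)²`, `Q(-X)²` and `2·Q(X²)` cancel
  have key : 2 * expand R 2 (graeffePlus Q - Q) =
      (Q ^ 2 - expand R 2 Q) + (Q.comp (-X) ^ 2 - expand R 2 Q) := by
    rw [map_sub, mul_sub, two_mul_expand_graeffePlus]; ring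
  have := (natDegree_add_le _ _).trans_lt (max_lt (hsq ▸ hsub) (hnegdeg ▸ hnegsub))
  rw [← key, ← C_ofNat, natDegree_C_mul h2, natDegree_expand] at this
  omega

theorem map_intCastRingHom_eq_zero_iff (n : ℕ) (p : ℤ[X]) :
    p.map (Int.castRingHom (ZMod n)) = 0 ↔ C (n : ℤ) ∣ p := by
  rw [C_dvd_iff_dvd_coeff]
  simp [Polynomial.ext_iff, ZMod.intCast_zmod_eq_zero_iff_dvd]

theorem natDegree_pos_of_irreducible_map {K : Type*} [Field K] {f : R →+* K} {p : R[X]}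
    (h : Irreducible (p.map f)) : 0 < p.natDegree :=
  h.natDegree_pos.trans_le natDegree_map_le

theorem Monic.natCard_adjoinRoot {g : R[X]} (hg : g.Monic) :
    Nat.card (AdjoinRoot g) = Nat.card R ^ g.natDegree := by
  rw [Nat.card_congr (AdjoinRoot.powerBasis' hg).basis.equivFun.toEquiv, Nat.card_fun,
    Nat.card_fin, AdjoinRoot.powerBasis'_dim]

end Polynomial

theorem Ideal.Quotient.mk_eq_aeval {R : Type*} [CommRing R] (I : Ideal R[X]) (p : R[X]) :
    Ideal.Quotient.mk I p = aeval (Ideal.Quotient.mk I X) p := by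
  rw [← Ideal.Quotient.mkₐ_eq_mk R, aeval_algHom_apply, aeval_X_left_apply]

theorem AdjoinRoot.root_ne_zero {K : Type*} [Field K] {g : K[X]} [Fact (Irreducible g)]
    (h : g.coeff 0 ≠ 0) : root g ≠ 0 := by
  intro h0
  have := eval₂_root g
  rw [h0, eval₂_at_zero, ← map_zero (of g)] at this
  exact h ((of g).injective this)

theorem exists_odd_mul_orderOf_add_one_eq_card {K : Type*} [Field K] [Finite K]
    (hK : Even (Nat.card K)) {x : K} (hx : x ≠ 0) :
    ∃ m, Odd m ∧ orderOf x * m + 1 = Nat.card K := by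
  have := Fintype.ofFinite K
  rw [Nat.card_eq_fintype_card] at hK ⊢
  obtain ⟨m, hm⟩ := orderOf_dvd_of_pow_eq_one (FiniteField.pow_card_sub_one_eq_one x hx)
  have hodd : Odd (Fintype.card K - 1) := Nat.Even.sub_odd Fintype.card_pos hK odd_one
  rw [hm] at hodd
  exact ⟨m, (Nat.odd_mul.mp hodd).2, by have := Fintype.card_pos (α := K); omega⟩

section FourEqZero

variable {A : Type*} [CommRing A]

theorem one_add_two_mul_sq (h4 : (4 : A) = 0) (c : A) : (1 + 2 * c) ^ 2 = 1 := by
  linear_combination (c + c ^ 2) * h4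

theorem one_add_two_mul_pow_of_odd (h4 : (4 : A) = 0) {m : ℕ} (hm : Odd m) (c : A) :
    (1 + 2 * c) ^ m = 1 + 2 * c := by
  obtain ⟨j, rfl⟩ := hm
  rw [pow_succ, pow_mul, one_add_two_mul_sq h4, one_pow, one_mul]

theorem isUnit_one_add_two_mul (h4 : (4 : A) = 0) (c : A) : IsUnit (1 + 2 * c) :=
  .of_pow_eq_one (one_add_two_mul_sq h4 c) two_ne_zero

theorem two_mul_sq (h4 : (4 : A) = 0) (c : A) : (2 * c) ^ 2 = 0 := by
  linear_combination c ^ 2 * h4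

variable {R : Type*} [CommRing R] [Algebra R A]

theorem sq_aeval_add_two_mul (h4 : (4 : A) = 0) (p : R[X]) (x c : A) :
    aeval (x + 2 * c) p ^ 2 = aeval x p ^ 2 := by
  rw [aeval_add_of_sq_eq_zero _ _ _ (two_mul_sq h4 c)]
  linear_combination (aeval x p * aeval x (derivative p) * c +
    (aeval x (derivative p) * c) ^ 2) * h4

theorem aeval_neg_graeffePlus (h4 : (4 : A) = 0) (p : R[X]) (x : A) :
    aeval (-x) (graeffePlus p) = aeval x (graeffe p) := by
  have hneg : -x = x + 2 * -x := by ring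
  simp only [graeffePlus, graeffe, map_add, map_sub, map_mul, map_pow, aeval_X]
  rw [hneg, sq_aeval_add_two_mul h4, sq_aeval_add_two_mul h4, ← hneg]
  ring

theorem eq_zero_of_aeval_add_eq {p : R[X]} {x δ : A} (hδ : δ ^ 2 = 0)
    (hp : IsUnit (aeval x (derivative p))) (h : aeval (x + δ) p = aeval x p) : δ = 0 := by
  rw [aeval_add_of_sq_eq_zero _ _ _ hδ, add_eq_left] at h
  exact hp.mul_right_eq_zero.mp h

theorem aeval_eq_zero_iff_pow_add_one_eq_zero (h4 : (4 : A) = 0) {p : R[X]} {x c : A}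
    {n m : ℕ} (hm : Odd m) (hx : IsUnit x) (hp : IsUnit (aeval x (derivative p)))
    (hc : x ^ n = 1 + 2 * c) (h : aeval (-x ^ (n * m + 1)) p = 0) :
    aeval x p = 0 ↔ x ^ n + 1 = 0 := by
  have hT : -x ^ (n * m + 1) = x + 2 * -(x * (1 + c)) := by
    rw [pow_succ, pow_mul, hc, one_add_two_mul_pow_of_odd h4 hm]
    ring
  rw [hT] at h
  constructor
  · intro h0
    have h2 := eq_zero_of_aeval_add_eq (two_mul_sq h4 _) hp (h.trans h0.symm)
    refine hx.mul_right_eq_zero.mp ?_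
    linear_combination x * hc - h2
  · intro h0
    have h2 : 2 * -(x * (1 + c)) = 0 := by linear_combination x * hc - x * h0
    rwa [h2, add_zero] at h

end FourEqZero

section ReductionModTwo

variable (Q : ℤ[X])

noncomputable def reduceModTwo : ℤ[X] →+* AdjoinRoot (Q.map (Int.castRingHom (ZMod 2))) :=
  (AdjoinRoot.mk _).comp (mapRingHom (Int.castRingHom (ZMod 2)))

theorem reduceModTwo_apply (p : ℤ[X]) :
    reduceModTwo Q p = AdjoinRoot.mk _ (p.map (Int.castRingHom (ZMod 2))) := rfl

theorem reduceModTwo_X : reduceModTwo Q X = AdjoinRoot.root _ := by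
  rw [reduceModTwo_apply, map_X, AdjoinRoot.mk_X]

theorem reduceModTwo_surjective : Function.Surjective (reduceModTwo Q) :=
  AdjoinRoot.mk_surjective.comp (map_surjective _ (ZMod.ringHom_surjective _))

theorem ker_reduceModTwo : RingHom.ker (reduceModTwo Q) = Ideal.span {C 2, Q} := by
  have hmap := map_surjective _ (ZMod.ringHom_surjective (Int.castRingHom (ZMod 2)))
  have hker : RingHom.ker (AdjoinRoot.mk (Q.map (Int.castRingHom (ZMod 2)))) =
      (Ideal.span {Q}).map (mapRingHom (Int.castRingHom (ZMod 2))) := by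
    rw [Ideal.map_span, Set.image_singleton]
    exact Ideal.mk_ker
  rw [reduceModTwo, ← RingHom.comap_ker, hker, Ideal.comap_map_of_surjective' _ hmap,
    ker_mapRingHom, ZMod.ker_intCastRingHom, Ideal.map_span, Set.image_singleton,
    ← Ideal.span_union, Set.union_comm, Set.singleton_union]
  rfl

theorem reduceModTwo_expand_two_pow (k : ℕ) (p : ℤ[X]) :
    reduceModTwo Q (expand ℤ (2 ^ k) p) = reduceModTwo Q p ^ 2 ^ k := by
  induction k with
  | zero => simp
  | succ k ih =>
    rw [pow_succ', ← expand_expand, reduceModTwo_apply, map_expand, ZMod.expand_card, map_pow,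
      ← reduceModTwo_apply, ih, ← pow_mul, mul_comm]

theorem reduceModTwo_comp_neg_X : reduceModTwo Q (Q.comp (-X)) = 0 := by
  rw [reduceModTwo_apply, Polynomial.map_comp, Polynomial.map_neg, map_X, CharTwo.neg_eq,
    comp_X, AdjoinRoot.mk_self]

theorem isUnit_reduceModTwo_derivative (hirr : Irreducible (Q.map (Int.castRingHom (ZMod 2))))
    {p : ℤ[X]} (hp : p.map (Int.castRingHom (ZMod 2)) = Q.map (Int.castRingHom (ZMod 2))) :
    IsUnit (reduceModTwo Q (derivative p)) := by
  have := Fact.mk hirr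
  refine IsUnit.mk0 _ ?_
  rw [reduceModTwo_apply, ← derivative_map, hp, ← AdjoinRoot.aeval_eq]
  exact (PerfectField.separable_of_irreducible hirr).aeval_derivative_ne_zero
    ((AdjoinRoot.aeval_eq _).trans AdjoinRoot.mk_self)

theorem exists_odd_mul_orderOf_root_add_one_eq_two_pow (hQ : Q.Monic)
    (hirr : Irreducible (Q.map (Int.castRingHom (ZMod 2))))
    (hroot : AdjoinRoot.root (Q.map (Int.castRingHom (ZMod 2))) ≠ 0) :
    ∃ m, Odd m ∧ orderOf (AdjoinRoot.root (Q.map (Int.castRingHom (ZMod 2)))) * m + 1 =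
      2 ^ Q.natDegree := by
  have := Fact.mk hirr
  have hcard := (hQ.map (Int.castRingHom (ZMod 2))).natCard_adjoinRoot
  rw [Nat.card_zmod, hQ.natDegree_map] at hcard
  have : Finite (AdjoinRoot (Q.map (Int.castRingHom (ZMod 2)))) :=
    Nat.finite_of_card_ne_zero (by simp [hcard])
  have hdeg := (natDegree_pos_of_irreducible_map hirr).ne'
  rw [← hcard]
  exact exists_odd_mul_orderOf_add_one_eq_card (hcard ▸ Nat.even_pow.mpr ⟨even_two, hdeg⟩) hroot

end ReductionModTwo

section QuotientRing

variable (Q : ℤ[X])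

theorem four_eq_zero : (4 : ℤ[X] ⧸ Ideal.span {C 4, Q}) = 0 := by
  rw [← map_ofNat (Ideal.Quotient.mk _), ← C_ofNat, Ideal.Quotient.eq_zero_iff_mem]
  exact Ideal.subset_span (by simp)

theorem exists_mk_eq_two_mul_of_reduceModTwo_eq_zero {p : ℤ[X]} (hp : reduceModTwo Q p = 0) :
    ∃ c, Ideal.Quotient.mk (Ideal.span {C 4, Q}) p = 2 * c := by
  rw [← RingHom.mem_ker, ker_reduceModTwo, Ideal.mem_span_pair] at hp
  obtain ⟨a, b, rfl⟩ := hp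
  refine ⟨Ideal.Quotient.mk _ a, ?_⟩
  have hQ : Ideal.Quotient.mk (Ideal.span {C 4, Q}) Q = 0 :=
    Ideal.Quotient.eq_zero_iff_mem.mpr (Ideal.subset_span (by simp))
  simp [hQ, map_ofNat, mul_comm]

theorem exists_mk_X_pow_orderOf_root_eq_one_add_two_mul :
    ∃ c, Ideal.Quotient.mk (Ideal.span {C 4, Q}) X ^
      orderOf (AdjoinRoot.root (Q.map (Int.castRingHom (ZMod 2)))) = 1 + 2 * c := by
  obtain ⟨c, hc⟩ := exists_mk_eq_two_mul_of_reduceModTwo_eq_zero Q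
    (p := X ^ orderOf (AdjoinRoot.root (Q.map (Int.castRingHom (ZMod 2)))) - 1)
    (by rw [map_sub, map_pow, map_one, reduceModTwo_X, pow_orderOf_eq_one, sub_self])
  rw [map_sub, map_pow, map_one] at hc
  exact ⟨c, by linear_combination hc⟩

theorem isUnit_mk_of_isUnit_reduceModTwo {p : ℤ[X]} (hp : IsUnit (reduceModTwo Q p)) :
    IsUnit (Ideal.Quotient.mk (Ideal.span {C 4, Q}) p) := by
  obtain ⟨u, hu⟩ := hp.exists_right_inv
  obtain ⟨q, rfl⟩ := reduceModTwo_surjective Q u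
  obtain ⟨c, hc⟩ := exists_mk_eq_two_mul_of_reduceModTwo_eq_zero Q (p := p * q - 1)
    (by simp [hu])
  refine isUnit_of_mul_isUnit_left (y := Ideal.Quotient.mk _ q) ?_
  rw [← map_mul, show p * q = 1 + (p * q - 1) by ring, map_add, hc, map_one]
  exact isUnit_one_add_two_mul (four_eq_zero Q) c

theorem reduceModTwo_eq_zero_of_two_mul_mem (hQ : Q.map (Int.castRingHom (ZMod 2)) ≠ 0)
    {p : ℤ[X]} (hp : C 2 * p ∈ Ideal.span {C 4, Q}) : reduceModTwo Q p = 0 := by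
  obtain ⟨a, b, hab⟩ := Ideal.mem_span_pair.mp hp
  have hb : b.map (Int.castRingHom (ZMod 2)) = 0 := by
    have h := congrArg (map (Int.castRingHom (ZMod 2))) hab
    have h2 : Int.castRingHom (ZMod 2) 2 = 0 := rfl
    have h4 : Int.castRingHom (ZMod 2) 4 = 0 := rfl
    simp only [Polynomial.map_add, Polynomial.map_mul, map_C, h2, h4, C_0, mul_zero,
      zero_add] at h
    exact (mul_eq_zero.mp h).resolve_right hQ
  obtain ⟨b', rfl⟩ := (map_intCastRingHom_eq_zero_iff 2 b).mp hb
  rw [← RingHom.mem_ker, ker_reduceModTwo, Ideal.mem_span_pair]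
  refine ⟨a, b', mul_left_cancel₀ (C_ne_zero.mpr two_ne_zero) ?_⟩
  rw [← hab, show (C 4 : ℤ[X]) = C 2 * C 2 by rw [← C_mul]; norm_num]
  push_cast
  ring

theorem mul_mem_of_reduceModTwo_eq_zero {p q : ℤ[X]} (hp : reduceModTwo Q p = 0)
    (hq : reduceModTwo Q q = 0) : p * q ∈ Ideal.span {C 4, Q} := by
  obtain ⟨a, ha⟩ := exists_mk_eq_two_mul_of_reduceModTwo_eq_zero Q hp
  obtain ⟨b, hb⟩ := exists_mk_eq_two_mul_of_reduceModTwo_eq_zero Q hq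
  rw [← Ideal.Quotient.eq_zero_iff_mem, map_mul, ha, hb]
  linear_combination a * b * four_eq_zero Q

theorem aeval_neg_pow_two_pow_graeffePlus {k : ℕ} (hk : k ≠ 0) :
    aeval (-Ideal.Quotient.mk (Ideal.span {C 4, Q}) X ^ 2 ^ k) (graeffePlus Q) = 0 := by
  obtain ⟨k, rfl⟩ := Nat.exists_eq_succ_of_ne_zero hk
  refine (aeval_neg_graeffePlus (four_eq_zero Q) Q _).trans ?_
  rw [← expand_aeval, pow_succ, ← expand_expand, expand_graeffe, map_mul,
    ← Ideal.Quotient.mk_eq_aeval, Ideal.Quotient.eq_zero_iff_mem]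
  apply mul_mem_of_reduceModTwo_eq_zero <;> rw [reduceModTwo_expand_two_pow]
  · rw [reduceModTwo_apply, AdjoinRoot.mk_self, zero_pow (by positivity)]
  · rw [reduceModTwo_comp_neg_X, zero_pow (by positivity)]

end QuotientRing

theorem conditionS_iff_C_four_dvd {Q : ℤ[X]} (hQ : Q.Monic) :
    conditionS Q ↔ C 4 ∣ graeffePlus Q - Q := by
  have hC8 : (C ((8 : ℕ) : ℤ) : ℤ[X]) = C 2 * C 4 := by rw [← C_mul]; norm_num
  rw [conditionS, ← two_mul_expand_graeffePlus, hQ.leadingCoeff, mul_one,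
    ← expand_eq_comp_X_pow, ← sub_eq_zero, ← Polynomial.map_sub, ← C_ofNat, ← mul_sub,
    ← map_sub, map_intCastRingHom_eq_zero_iff, hC8,
    mul_dvd_mul_iff_left (C_ne_zero.mpr two_ne_zero)]
  rw [show (4 : ℤ) = ((4 : ℕ) : ℤ) by norm_num, ← map_intCastRingHom_eq_zero_iff,
    ← map_intCastRingHom_eq_zero_iff, map_expand, expand_eq_zero two_pos]

theorem graeffePlus_sub_mem_iff {Q : ℤ[X]} (hQ : Q.Monic)
    (hirr : Irreducible (Q.map (Int.castRingHom (ZMod 2)))) :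
    graeffePlus Q - Q ∈ Ideal.span {C 4, Q} ↔ C 4 ∣ graeffePlus Q - Q := by
  refine ⟨fun h ↦ ?_, fun ⟨w, hw⟩ ↦ hw ▸ Ideal.mul_mem_right _ _ (Ideal.subset_span (by simp))⟩
  obtain ⟨W, hW⟩ := (map_intCastRingHom_eq_zero_iff 2 (graeffePlus Q - Q)).mp
    (by rw [Polynomial.map_sub, map_graeffePlus_zmod_two, sub_self])
  push_cast at hW
  rw [hW] at h ⊢
  have hdvd := AdjoinRoot.mk_eq_zero.mp (reduceModTwo_eq_zero_of_two_mul_mem Q hirr.ne_zero h)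
  have hW0 : W.map (Int.castRingHom (ZMod 2)) = 0 := by
    refine eq_zero_of_dvd_of_natDegree_lt hdvd ?_
    rw [hQ.natDegree_map]
    calc (W.map (Int.castRingHom (ZMod 2))).natDegree ≤ W.natDegree := natDegree_map_le
      _ = (graeffePlus Q - Q).natDegree := by rw [hW, natDegree_C_mul two_ne_zero]
      _ < Q.natDegree :=
        natDegree_graeffePlus_sub_lt two_ne_zero hQ (natDegree_pos_of_irreducible_map hirr).ne'
  obtain ⟨w, rfl⟩ := (map_intCastRingHom_eq_zero_iff 2 W).mp hW0
  exact ⟨w, by rw [← mul_assoc, ← C_mul]; norm_num⟩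

theorem stmt10_general (Q : Polynomial ℤ)
    (hmonic : Q.Monic) (hconst : Odd (Q.coeff 0))
    (hirr : Irreducible (Q.map (Int.castRingHom (ZMod 2))))
    (lam : ℕ)
    (hlam : lam = orderOf (Ideal.Quotient.mk
      (Ideal.span {Q.map (Int.castRingHom (ZMod 2))}) (X : Polynomial (ZMod 2)))) :
    (X ^ lam + 1 ∈ Ideal.span ({C 4, Q} : Set (Polynomial ℤ))) ↔ conditionS Q := by
  have := Fact.mk hirr
  -- `AdjoinRoot g` is `K[X] ⧸ span {g}` and `root g` is the class of `X`, by definition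
  replace hlam : lam = orderOf (AdjoinRoot.root (Q.map (Int.castRingHom (ZMod 2)))) := hlam
  set t := Ideal.Quotient.mk (Ideal.span {C 4, Q}) X
  have hroot : AdjoinRoot.root (Q.map (Int.castRingHom (ZMod 2))) ≠ 0 :=
    AdjoinRoot.root_ne_zero (by simpa [coeff_map, ZMod.intCast_eq_zero_iff_even] using hconst)
  obtain ⟨m, hm, hlm⟩ := exists_odd_mul_orderOf_root_add_one_eq_two_pow Q hmonic hirr hroot
  obtain ⟨c, hc⟩ := exists_mk_X_pow_orderOf_root_eq_one_add_two_mul Q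
  rw [← hlam] at hlm hc
  have ht : IsUnit t :=
    isUnit_mk_of_isUnit_reduceModTwo Q (by rw [reduceModTwo_X]; exact hroot.isUnit)
  have hF' : IsUnit (aeval t (derivative (graeffePlus Q))) := by
    rw [← Ideal.Quotient.mk_eq_aeval]
    exact isUnit_mk_of_isUnit_reduceModTwo Q
      (isUnit_reduceModTwo_derivative Q hirr (map_graeffePlus_zmod_two Q))
  have hF : aeval (-t ^ (lam * m + 1)) (graeffePlus Q) = 0 := by
    rw [hlm]
    exact aeval_neg_pow_two_pow_graeffePlus Q (natDegree_pos_of_irreducible_map hirr).ne'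
  have hQ : Ideal.Quotient.mk (Ideal.span {C 4, Q}) Q = 0 :=
    Ideal.Quotient.eq_zero_iff_mem.mpr (Ideal.subset_span (by simp))
  calc _ ↔ t ^ lam + 1 = 0 := by rw [← Ideal.Quotient.eq_zero_iff_mem, map_add, map_pow, map_one]
    _ ↔ aeval t (graeffePlus Q) = 0 :=
        (aeval_eq_zero_iff_pow_add_one_eq_zero (four_eq_zero Q) hm ht hF' hc hF).symm
    _ ↔ graeffePlus Q - Q ∈ Ideal.span {C 4, Q} := by
        rw [← Ideal.Quotient.eq_zero_iff_mem, map_sub, hQ, sub_zero, Ideal.Quotient.mk_eq_aeval]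
    _ ↔ conditionS Q :=
        (graeffePlus_sub_mem_iff hmonic hirr).trans (conditionS_iff_C_four_dvd hmonic).symm

theorem stmt10 (Q : Polynomial ℤ) (r : ℕ) (hr : Q.natDegree = r)
    (hmonic : Q.Monic) (hconst : Odd (Q.coeff 0))
    (hirr : Irreducible (Q.map (Int.castRingHom (ZMod 2))))
    (lam : ℕ)
    (hlam : lam = orderOf (Ideal.Quotient.mk
      (Ideal.span {Q.map (Int.castRingHom (ZMod 2))}) (X : Polynomial (ZMod 2)))) :
    (X ^ lam + 1 ∈ Ideal.span ({C 4, Q} : Set (Polynomial ℤ))) ↔ conditionS Q :=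
  stmt10_general Q hmonic hconst hirr lam hlam
end

section
/- Let Q(t) ∈ ℤ[t] be monic of degree r with Q mod 2 irreducible and odd constant coefficient, and let λ be the multiplicative order of t in (ℤ/2)[t]/(Q). If Q(t) satisfies Condition S, then for all w ≥ 3, t^{2^{w−2} λ} ≡ 1 (mod 2^w, Q). -/
open Polynomial

/-!
Let `R = ℤ[X]/(Q)` with root `x`: it has no `2`-torsion since `Q` is monic, and reduction mod `2`
maps it onto the field `F = 𝔽₂[X]/(q)` with kernel `2R`. The order `λ` of `x` in `F` is odd because
Frobenius is injective on `F`. Condition S at `x` reads `Q(-x) = 2u`, `Q(x²) = 2w` with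
`w ≡ u² (mod 2)`, and it follows that `P(x²)/2 ≡ (P(-x)/2)² (mod 2)` for every `P ∈ (2, Q)`.
For `P = X^λ - 1` and `x^λ = 1 + 2e` the two halves are `2e(1 + e)` and `-(1 + e)`, so `e` is odd,
i.e. `x^λ ≡ -1 (mod 4)`, and `x^{2λ} - 1 = 4e(1 + e)` is divisible by `8`. Each further squaring
gains one factor of `2`.
-/

theorem not_dvd_orderOf {R : Type*} [CommRing R] [IsReduced R] (p : ℕ) [Fact p.Prime]
    [CharP R p] {x : R} (hx : orderOf x ≠ 0) : ¬ p ∣ orderOf x := by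
  rintro ⟨m, hm⟩
  have hm0 : 0 < m := Nat.pos_of_ne_zero <| by rintro rfl; exact hx hm
  have hxm : x ^ m = 1 := frobenius_inj R p <| by
    rw [frobenius_def, map_one, ← pow_mul, mul_comm, ← hm, pow_orderOf_eq_one]
  have := Nat.le_of_dvd hm0 (orderOf_dvd_of_pow_eq_one hxm)
  have := (Fact.out : p.Prime).two_le
  nlinarith

theorem two_pow_succ_dvd_sq_sub_one {R : Type*} [CommRing R] {y : R} {n : ℕ} (hn : n ≠ 0)
    (h : 2 ^ n ∣ y - 1) : 2 ^ (n + 1) ∣ y ^ 2 - 1 := by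
  obtain ⟨a, ha⟩ := h
  obtain ⟨m, rfl⟩ := Nat.exists_eq_add_one_of_ne_zero hn
  exact ⟨a * (2 ^ m * a + 1), by linear_combination (y + 1 + 2 ^ (m + 1) * a) * ha⟩

theorem two_pow_add_dvd_pow_two_pow_sub_one {R : Type*} [CommRing R] {y : R} {n : ℕ}
    (hn : n ≠ 0) (h : 2 ^ n ∣ y - 1) (k : ℕ) : 2 ^ (n + k) ∣ y ^ 2 ^ k - 1 := by
  induction k with
  | zero => simpa
  | succ k ih =>
    rw [← add_assoc, pow_succ 2 k, pow_mul]
    exact two_pow_succ_dvd_sq_sub_one (by omega) ih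

theorem natCast_mul_left_injective {R : Type*} [NonAssocSemiring R] [IsAddTorsionFree R] {n : ℕ}
    (hn : n ≠ 0) : Function.Injective ((n : R) * ·) := fun a b h => by
  simpa only [← nsmul_eq_mul, nsmul_right_inj hn] using h

theorem Polynomial.map_intCastRingHom_eq_zero_iff_s13 (n : ℕ) (P : ℤ[X]) :
    P.map (Int.castRingHom (ZMod n)) = 0 ↔ C (n : ℤ) ∣ P := by
  rw [C_dvd_iff_dvd_coeff]
  simp [Polynomial.ext_iff, ZMod.intCast_zmod_eq_zero_iff_dvd]

theorem conditionS_iff_dvd (Q : ℤ[X]) : conditionS Q ↔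
    C 8 ∣ Q ^ 2 + (Q.comp (-X)) ^ 2 - C (2 * Q.leadingCoeff) * Q.comp (X ^ 2) := by
  rw [conditionS, ← sub_eq_zero, ← Polynomial.map_sub]
  exact map_intCastRingHom_eq_zero_iff_s13 8 _

theorem RingHom.map_aeval_int {R S : Type*} [CommRing R] [CommRing S] (π : R →+* S)
    (P : ℤ[X]) (y : R) : π (aeval y P) = aeval (π y) P :=
  (aeval_algHom_apply π.toIntAlgHom y P).symm

section Reduction

variable {R F : Type*} [CommRing R] [CommRing F] [CharP F 2] (π : R →+* F)

theorem map_aeval_neg (P : ℤ[X]) (y : R) : π (aeval (-y) P) = π (aeval y P) := by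
  rw [π.map_aeval_int, π.map_aeval_int, map_neg, CharTwo.neg_eq]

theorem map_aeval_sq (P : ℤ[X]) (y : R) : π (aeval (y ^ 2) P) = π (aeval y P) ^ 2 := by
  rw [π.map_aeval_int, π.map_aeval_int, map_pow, ← frobenius_def,
    ← (frobenius F 2).map_aeval_int, frobenius_def]

variable [IsAddTorsionFree R] {Q : ℤ[X]} {x u w : R}

theorem exists_aeval_neg_aeval_sq_of_conditionS (hπ : RingHom.ker π ≤ Ideal.span {2})
    (hmonic : Q.Monic) (hS : conditionS Q) (hx : aeval x Q = 0) :
    ∃ u w : R, aeval (-x) Q = 2 * u ∧ aeval (x ^ 2) Q = 2 * w ∧ π w = π u ^ 2 := by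
  obtain ⟨u, hu⟩ : 2 ∣ aeval (-x) Q := Ideal.mem_span_singleton.mp <| hπ <| by
    rw [RingHom.mem_ker, map_aeval_neg, hx, map_zero]
  obtain ⟨w, hw⟩ : 2 ∣ aeval (x ^ 2) Q := Ideal.mem_span_singleton.mp <| hπ <| by
    rw [RingHom.mem_ker, map_aeval_sq, hx, map_zero, zero_pow two_ne_zero]
  obtain ⟨V, hV⟩ := (conditionS_iff_dvd Q).mp hS
  have h := congrArg (aeval x) hV
  simp only [map_sub, map_add, map_mul, map_pow, aeval_comp, aeval_X, map_neg, hx, hu, hw,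
    hmonic.leadingCoeff, map_ofNat, map_one] at h
  have huw : u ^ 2 - w = 2 * aeval x V :=
    natCast_mul_left_injective (R := R) (n := 4) (by norm_num) (by push_cast; linear_combination h)
  refine ⟨u, w, hu, hw, ?_⟩
  have h2 : π (u ^ 2 - w) = 0 := by rw [huw, map_mul, map_ofNat, CharTwo.two_eq_zero, zero_mul]
  rwa [map_sub, map_pow, sub_eq_zero, eq_comm] at h2

theorem map_sq_of_mem_span_C_two (hu : aeval (-x) Q = 2 * u) (hw : aeval (x ^ 2) Q = 2 * w)
    (huw : π w = π u ^ 2) {P : ℤ[X]} (hP : P ∈ Ideal.span {C 2, Q}) {a b : R}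
    (ha : aeval (-x) P = 2 * a) (hb : aeval (x ^ 2) P = 2 * b) : π b = π a ^ 2 := by
  obtain ⟨E, K, rfl⟩ := Ideal.mem_span_pair.mp hP
  have ha' : a = aeval (-x) E + aeval (-x) K * u := natCast_mul_left_injective (n := 2)
    two_ne_zero <| by
      simp only [map_add, map_mul, map_ofNat, hu] at ha
      push_cast; linear_combination -ha
  have hb' : b = aeval (x ^ 2) E + aeval (x ^ 2) K * w := natCast_mul_left_injective (n := 2)
    two_ne_zero <| by
      simp only [map_add, map_mul, map_ofNat, hw] at hb
      push_cast; linear_combination -hb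
  rw [ha', hb', map_add, map_mul, map_add, map_mul, map_aeval_neg, map_aeval_neg, map_aeval_sq,
    map_aeval_sq, huw, CharTwo.add_sq, mul_pow]

theorem eight_dvd_pow_two_mul_sub_one [IsReduced F] (hπ : RingHom.ker π ≤ Ideal.span {2})
    (hmonic : Q.Monic) (hS : conditionS Q) (hx : aeval x Q = 0) {n : ℕ} (hn : Odd n)
    (hXn : X ^ n - 1 ∈ Ideal.span {C 2, Q}) : 8 ∣ x ^ (2 * n) - 1 := by
  obtain ⟨u, w, hu, hw, huw⟩ := exists_aeval_neg_aeval_sq_of_conditionS π hπ hmonic hS hx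
  obtain ⟨E, K, hEK⟩ := Ideal.mem_span_pair.mp hXn
  set e := aeval x E
  have he : x ^ n = 1 + 2 * e := by
    have h := congrArg (aeval x) hEK
    simp only [map_add, map_mul, map_ofNat, hx, map_sub, map_pow, aeval_X, map_one] at h
    linear_combination -h
  have key := map_sq_of_mem_span_C_two π hu hw huw hXn (a := -(1 + e)) (b := 2 * e * (1 + e))
    (by rw [map_sub, map_pow, aeval_X, map_one, hn.neg_pow, he]; ring)
    (by rw [map_sub, map_pow, aeval_X, map_one, ← pow_mul, mul_comm, pow_mul, he]; ring)
  have he_odd : π (1 + e) = 0 := by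
    rw [map_mul, map_mul, map_ofNat, CharTwo.two_eq_zero, zero_mul, zero_mul, map_neg, neg_sq]
      at key
    exact IsReduced.eq_zero _ ⟨2, key.symm⟩
  obtain ⟨c, hc⟩ := Ideal.mem_span_singleton.mp (hπ he_odd)
  refine ⟨e * c, ?_⟩
  rw [mul_comm, pow_mul, he]
  linear_combination 4 * e * hc

end Reduction

namespace AdjoinRoot

theorem map_mk {A B : Type*} [CommRing A] [CommRing B] (f : A →+* B) (p : A[X]) (q : B[X])
    (h : q ∣ p.map f) (g : A[X]) : map f p q h (mk p g) = mk q (g.map f) := by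
  rw [← aeval_eq, ← aeval_eq, map_aeval_eq_aeval_map (φ := f) (by ext; simp), map_root]

theorem mem_span_C_pair_iff_dvd {A : Type*} [CommRing A] (c : A) (P Q : A[X]) :
    P ∈ Ideal.span {C c, Q} ↔ of Q c ∣ mk Q P := by
  rw [Ideal.mem_span_pair]
  constructor
  · rintro ⟨a, b, rfl⟩
    exact ⟨mk Q a, by simp [mul_comm]⟩
  · rintro ⟨t, ht⟩
    obtain ⟨a, rfl⟩ := mk_surjective t
    obtain ⟨b, hb⟩ := mk_eq_mk.mp (ht.trans (by simp [mul_comm]) : mk Q P = mk Q (a * C c))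
    exact ⟨a, b, by linear_combination -hb⟩

theorem mem_span_C_pair_of_dvd_map {n : ℕ} {P Q : ℤ[X]}
    (h : Q.map (Int.castRingHom (ZMod n)) ∣ P.map (Int.castRingHom (ZMod n))) :
    P ∈ Ideal.span {C (n : ℤ), Q} := by
  obtain ⟨g, hg⟩ := h
  obtain ⟨G, rfl⟩ := map_surjective (Int.castRingHom (ZMod n)) ZMod.intCast_surjective g
  obtain ⟨H, hH⟩ := (map_intCastRingHom_eq_zero_iff_s13 n (P - Q * G)).mp (by simp [hg])
  exact Ideal.mem_span_pair.mpr ⟨H, G, by linear_combination -hH⟩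

theorem ker_map_intCastRingHom_le (n : ℕ) (Q : ℤ[X]) :
    RingHom.ker (map (Int.castRingHom (ZMod n)) Q (Q.map (Int.castRingHom (ZMod n))) dvd_rfl) ≤
      Ideal.span {(n : AdjoinRoot Q)} := by
  intro a ha
  obtain ⟨P, rfl⟩ := mk_surjective a
  rw [RingHom.mem_ker] at ha
  rw [Ideal.mem_span_singleton, ← map_natCast (of Q), ← mem_span_C_pair_iff_dvd]
  exact mem_span_C_pair_of_dvd_map (mk_eq_zero.mp (by rwa [map_mk] at ha))

theorem eight_dvd_root_pow_two_mul_orderOf_sub_one {Q : ℤ[X]} (hmonic : Q.Monic)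
    (hirr : Irreducible (Q.map (Int.castRingHom (ZMod 2)))) (hS : conditionS Q) :
    8 ∣ root Q ^ (2 * orderOf (root (Q.map (Int.castRingHom (ZMod 2))))) - 1 := by
  set q := Q.map (Int.castRingHom (ZMod 2))
  have : Fact (Irreducible q) := ⟨hirr⟩
  have : CharP (AdjoinRoot q) 2 :=
    charP_of_injective_algebraMap (algebraMap (ZMod 2) _).injective 2
  have := hmonic.free_adjoinRoot
  have : IsAddTorsionFree (AdjoinRoot Q) :=
    Module.isTorsionFree_int_iff_isAddTorsionFree.mp inferInstance
  rcases Nat.even_or_odd (orderOf (root q)) with heven | hodd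
  · -- an even order can only be the junk value `0`
    have h0 : orderOf (root q) = 0 := by_contra fun h0 => not_dvd_orderOf 2 h0 heven.two_dvd
    simp [h0]
  have hXn : X ^ orderOf (root q) - 1 ∈ Ideal.span {C 2, Q} :=
    mem_span_C_pair_of_dvd_map (n := 2) <| by
      rw [← mk_eq_zero, Polynomial.map_sub, Polynomial.map_pow, map_X, Polynomial.map_one,
        map_sub, map_pow, mk_X, map_one, sub_eq_zero]
      exact pow_orderOf_eq_one (root q)
  exact eight_dvd_pow_two_mul_sub_one _ (ker_map_intCastRingHom_le 2 Q) hmonic hS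
    (aeval_eq Q ▸ mk_self) hodd (by simpa using hXn)

end AdjoinRoot

theorem stmt13_general (Q : Polynomial ℤ)
    (hmonic : Q.Monic)
    (hirr : Irreducible (Q.map (Int.castRingHom (ZMod 2))))
    (lam : ℕ)
    (hlam : lam = orderOf (Ideal.Quotient.mk
      (Ideal.span {Q.map (Int.castRingHom (ZMod 2))}) (X : Polynomial (ZMod 2))))
    (hS : conditionS Q) :
    ∀ w : ℕ, 3 ≤ w →
      X ^ (2 ^ (w - 2) * lam) - 1 ∈
        Ideal.span ({C ((2 : ℤ) ^ w), Q} : Set (Polynomial ℤ)) := by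
  intro w hw
  obtain ⟨k, rfl⟩ := Nat.exists_eq_add_of_le' hw
  have h8 : (2 : AdjoinRoot Q) ^ 3 ∣ AdjoinRoot.root Q ^ (2 * lam) - 1 := by
    subst hlam
    norm_num
    exact AdjoinRoot.eight_dvd_root_pow_two_mul_orderOf_sub_one hmonic hirr hS
  rw [AdjoinRoot.mem_span_C_pair_iff_dvd]
  convert two_pow_add_dvd_pow_two_pow_sub_one three_ne_zero h8 k using 1
  · simp [add_comm]
  · simp [← pow_mul]
    ring_nf

theorem stmt13 (Q : Polynomial ℤ) (r : ℕ) (hr : Q.natDegree = r)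
    (hmonic : Q.Monic) (hconst : Odd (Q.coeff 0))
    (hirr : Irreducible (Q.map (Int.castRingHom (ZMod 2))))
    (lam : ℕ)
    (hlam : lam = orderOf (Ideal.Quotient.mk
      (Ideal.span {Q.map (Int.castRingHom (ZMod 2))}) (X : Polynomial (ZMod 2))))
    (hS : conditionS Q) :
    ∀ w : ℕ, 3 ≤ w →
      X ^ (2 ^ (w - 2) * lam) - 1 ∈
        Ideal.span ({C ((2 : ℤ) ^ w), Q} : Set (Polynomial ℤ)) :=
  stmt13_general Q hmonic hirr lam hlam hS
end

section
/- Let Q(t) = q_0 + q_s t^s + q_r t^r be a trinomial with 0 < s < r, r > 2, all of q_0, q_s, q_r odd, such that Q mod 2 is primitive over ℤ/2 (i.e., t has multiplicative order 2^r − 1 in (ℤ/2)[t]/(Q)). Then Q(t) does not satisfy Condition S. -/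
open Polynomial

theorem Polynomial.coeff_sq_add_sq_comp_neg_X {R : Type*} [CommRing R] (p : R[X]) (n : ℕ) :
    (p ^ 2 + p.comp (-X) ^ 2).coeff n = (1 + (-1) ^ n) * (p ^ 2).coeff n := by
  rw [← pow_comp, ← neg_one_mul (X : R[X]), ← C_1, ← C_neg, coeff_add, comp_C_mul_X_coeff]
  ring

theorem conditionS.coeff_sq_modEq {Q : ℤ[X]} (hS : conditionS Q) (m : ℕ) :
    (Q ^ 2).coeff (2 * m) ≡ Q.leadingCoeff * Q.coeff m [ZMOD 4] := by
  have h := congrArg (coeff · (2 * m)) hS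
  rw [coeff_map, coeff_map, coeff_sq_add_sq_comp_neg_X, coeff_C_mul, ← expand_eq_comp_X_pow,
    coeff_expand_mul' two_pos, pow_mul, neg_one_sq, one_pow, eq_intCast, eq_intCast,
    ZMod.intCast_eq_intCast_iff_dvd_sub, mul_assoc] at h
  rw [Int.modEq_iff_dvd]
  omega

theorem conditionS.coeff_sq_ne_two_mul_of_odd {Q : ℤ[X]} (hS : conditionS Q) {m : ℕ} {x y : ℤ}
    (hx : Odd x) (hy : Odd y) (hm : Q.coeff m = 0) : (Q ^ 2).coeff (m + m) ≠ 2 * x * y := by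
  intro hsq
  have h4 := hS.coeff_sq_modEq m
  rw [two_mul, hsq, hm, mul_zero, mul_assoc] at h4
  obtain ⟨k, hk⟩ := hx.mul hy
  rw [hk] at h4
  simp only [Int.ModEq] at h4
  omega

section Trinomial

variable {R : Type*} [CommSemiring R] (a b c : R) {s r : ℕ}

theorem trinomial_sq :
    (C a + C b * X ^ s + C c * X ^ r) ^ 2 = C (a ^ 2) + C (2 * a * b) * X ^ s
      + C (2 * a * c) * X ^ r + C (b ^ 2) * X ^ (2 * s) + C (2 * b * c) * X ^ (s + r)
      + C (c ^ 2) * X ^ (2 * r) := by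
  simp only [map_mul, map_pow, map_ofNat]
  ring

theorem coeff_trinomial_eq_zero {m : ℕ} (hm0 : m ≠ 0) (hms : m ≠ s) (hmr : m ≠ r) :
    (C a + C b * X ^ s + C c * X ^ r).coeff m = 0 := by
  simp [coeff_X_pow, coeff_C, hm0, hms, hmr]

theorem coeff_trinomial_sq_left (hs : 0 < s) (hsr : s < r) :
    ((C a + C b * X ^ s + C c * X ^ r) ^ 2).coeff s = 2 * a * b := by
  rw [trinomial_sq]
  simp only [coeff_add, coeff_C_mul_X_pow, coeff_C]
  simp [show s ≠ 0 by omega, show s ≠ r by omega,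
    show s ≠ 2 * s by omega, show s ≠ 2 * r by omega, show r ≠ 0 by omega]

theorem coeff_trinomial_sq_right (hs : 0 < s) (hsr : s < r) (h : r ≠ 2 * s) :
    ((C a + C b * X ^ s + C c * X ^ r) ^ 2).coeff r = 2 * a * c := by
  rw [trinomial_sq]
  simp only [coeff_add, coeff_C_mul_X_pow, coeff_C]
  simp [show r ≠ 0 by omega, show r ≠ s by omega, h,
    show r ≠ 2 * r by omega, show s ≠ 0 by omega]

theorem coeff_trinomial_sq_add (hs : 0 < s) (hsr : s < r) :
    ((C a + C b * X ^ s + C c * X ^ r) ^ 2).coeff (s + r) = 2 * b * c := by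
  rw [trinomial_sq]
  simp only [coeff_add, coeff_C_mul_X_pow, coeff_C]
  simp [show s ≠ 0 by omega, show r ≠ 0 by omega,
    show s + r ≠ 2 * s by omega, show s + r ≠ 2 * r by omega]

end Trinomial

theorem eq_two_mul_of_conditionS_trinomial {a b c : ℤ} {s r : ℕ} (hs : 0 < s) (hsr : s < r)
    (ha : Odd a) (hb : Odd b) (hc : Odd c)
    (hS : conditionS (C a + C b * X ^ s + C c * X ^ r)) : r = 2 * s := by
  by_contra hr
  rcases Nat.even_or_odd s with ⟨m, hm⟩ | hs_odd
  · refine hS.coeff_sq_ne_two_mul_of_odd (m := m) ha hb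
      (coeff_trinomial_eq_zero a b c (by omega) (by omega) (by omega)) ?_
    rw [← hm, coeff_trinomial_sq_left a b c hs hsr]
  rcases Nat.even_or_odd r with ⟨m, hm⟩ | hr_odd
  · refine hS.coeff_sq_ne_two_mul_of_odd (m := m) ha hc
      (coeff_trinomial_eq_zero a b c (by omega) (by omega) (by omega)) ?_
    rw [← hm, coeff_trinomial_sq_right a b c hs hsr hr]
  · obtain ⟨m, hm⟩ := hs_odd.add_odd hr_odd
    refine hS.coeff_sq_ne_two_mul_of_odd (m := m) hb hc
      (coeff_trinomial_eq_zero a b c (by omega) (by omega) (by omega)) ?_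
    rw [← hm, coeff_trinomial_sq_add a b c hs hsr]

theorem map_trinomial_zmod_two {a b c : ℤ} {s r : ℕ} (ha : Odd a) (hb : Odd b) (hc : Odd c) :
    (C a + C b * X ^ s + C c * X ^ r).map (Int.castRingHom (ZMod 2)) = 1 + X ^ s + X ^ r := by
  simp only [Polynomial.map_add, Polynomial.map_mul, Polynomial.map_pow, map_C, map_X,
    Int.coe_castRingHom, ha.intCast_zmod_two, hb.intCast_zmod_two, hc.intCast_zmod_two, C_1,
    one_mul]

theorem Polynomial.X_pow_three_mul_eq_one {R : Type*} [CommRing R] (s : ℕ) :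
    Ideal.Quotient.mk (Ideal.span {1 + X ^ s + X ^ (2 * s)}) (X : R[X]) ^ (3 * s) = 1 := by
  rw [← map_pow, ← map_one (Ideal.Quotient.mk _), Ideal.Quotient.eq, Ideal.mem_span_singleton]
  exact ⟨X ^ s - 1, by ring⟩

theorem Nat.three_mul_lt_two_pow_two_mul_sub_one {s : ℕ} (hs : 2 ≤ s) :
    3 * s < 2 ^ (2 * s) - 1 := by
  have h := Nat.lt_two_pow_self (n := s)
  have : (s + 1) * (s + 1) ≤ 2 ^ (2 * s) := by rw [two_mul, pow_add]; exact Nat.mul_le_mul h h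
  have : 3 * s + 1 < (s + 1) * (s + 1) := by nlinarith
  omega

theorem stmt16 (q0 qs qr : ℤ) (s r : ℕ) (hs : 0 < s) (hsr : s < r) (hr2 : 2 < r)
    (h0 : Odd q0) (hqs : Odd qs) (hqr : Odd qr)
    (Q : Polynomial ℤ) (hQ : Q = C q0 + C qs * X ^ s + C qr * X ^ r)
    (hprim : orderOf (Ideal.Quotient.mk
      (Ideal.span {Q.map (Int.castRingHom (ZMod 2))}) (X : Polynomial (ZMod 2))) =
        2 ^ r - 1) :
    ¬ conditionS Q := by
  intro hS
  subst hQ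
  obtain rfl : r = 2 * s := eq_two_mul_of_conditionS_trinomial hs hsr h0 hqs hqr hS
  have hdvd : 2 ^ (2 * s) - 1 ∣ 3 * s := by
    rw [← hprim, map_trinomial_zmod_two h0 hqs hqr]
    exact orderOf_dvd_of_pow_eq_one (X_pow_three_mul_eq_one s)
  exact (Nat.le_of_dvd (by omega) hdvd).not_gt
    (Nat.three_mul_lt_two_pow_two_mul_sub_one (by omega))
end

section
/- Let Q(t) = q_0 + q_s t^s + q_r t^r be a trinomial with 0 < s < r, r ≠ 2s, all of q_0, q_s, q_r odd, and Q mod 2 irreducible over ℤ/2. Let λ be the multiplicative order of t in (ℤ/2)[t]/(Q). Then for every w ≥ 1, the multiplicative order of t in (ℤ/2^w)[t]/(Q) equals 2^{w−1} λ. -/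
open Polynomial
noncomputable section
local notation "phi2" => Int.castRingHom (ZMod 2)



lemma two_eq_zero' : (2 : Polynomial (ZMod 2)) = 0 := by
  rw [← map_ofNat (C : ZMod 2 →+* Polynomial (ZMod 2)) 2, show (2:ZMod 2) = 0 by decide, map_zero]

lemma odd_cast2 {m : ℤ} (h : Odd m) : ((m : ZMod 2)) = 1 := by
  obtain ⟨k, rfl⟩ := h; push_cast; rw [show ((2:ZMod 2)) = 0 by decide]; ring

lemma cast2_eq_zero {m : ℤ} : ((m : ZMod 2)) = 0 ↔ 2 ∣ m := by
  simpa using ZMod.intCast_zmod_eq_zero_iff_dvd m 2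

lemma dvd2_of_map_eq_zero {G : Polynomial ℤ} (h : G.map phi2 = 0) : ∃ H, G = 2 * H := by
  have : (C (2:ℤ)) ∣ G := by
    rw [Polynomial.C_dvd_iff_dvd_coeff]
    intro i
    have := congrArg (fun p => Polynomial.coeff p i) h
    simp only [Polynomial.coeff_map, Polynomial.coeff_zero] at this
    exact_mod_cast cast2_eq_zero.mp this
  obtain ⟨H, hH⟩ := this
  exact ⟨H, by simpa [Polynomial.C_eq_natCast] using hH⟩

lemma div2_lemma {Q : Polynomial ℤ} (hQ0 : Q.map phi2 ≠ 0) :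
    ∀ (n : ℕ) (v c : Polynomial ℤ), 2^n * v = Q * c → (Q.map phi2) ∣ v.map phi2 := by
  intro n
  induction n with
  | zero => intro v c h; rw [pow_zero, one_mul] at h; exact ⟨c.map phi2, by rw [h]; simp⟩
  | succ n ih =>
    intro v c h
    have hc : (c.map phi2) = 0 := by
      have := congrArg (Polynomial.map phi2) h
      simp only [Polynomial.map_mul, Polynomial.map_pow] at this
      have h2 : ((2:Polynomial ℤ).map phi2) = 0 := by
        rw [Polynomial.map_ofNat]; exact two_eq_zero'
      rw [h2, zero_pow (by omega), zero_mul] at this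
      rcases mul_eq_zero.mp this.symm with h' | h'
      · exact absurd h' hQ0
      · exact h'
    obtain ⟨c', hc'⟩ := dvd2_of_map_eq_zero hc
    refine ih v c' ?_
    have : (2:Polynomial ℤ) * (2^n * v) = 2 * (Q * c') := by
      rw [← mul_assoc, ← pow_succ']
      rw [h, hc']; ring
    exact mul_left_cancel₀ (by norm_num) this

lemma sq_self (a : ZMod 2) : a * a = a := by revert a; decide

lemma comp_sq (p : Polynomial (ZMod 2)) : p.comp (X^2) = p * p := by
  induction p using Polynomial.induction_on' with
  | add p q hp hq =>
    rw [Polynomial.add_comp, hp, hq]; ring_nf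
    rw [show p*q*2 = 2*(p*q) by ring, two_eq_zero']; ring
  | monomial n a =>
    rw [← Polynomial.C_mul_X_pow_eq_monomial, Polynomial.mul_comp, Polynomial.C_comp,
      Polynomial.pow_comp, Polynomial.X_comp, ← pow_mul, mul_mul_mul_comm, ← Polynomial.C_mul,
      sq_self, ← pow_add, two_mul]


lemma transfer (N : ℕ) [NeZero N] (Q P : Polynomial ℤ) :
    Ideal.Quotient.mk (Ideal.span {Q.map (Int.castRingHom (ZMod N))})
      (P.map (Int.castRingHom (ZMod N))) = 0 ↔
    ∃ a b : Polynomial ℤ, P = Q * a + C (N:ℤ) * b := by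
  set φ := Int.castRingHom (ZMod N)
  have hCN : (C ((N:ℤ)) : Polynomial ℤ).map φ = 0 := by
    rw [Polynomial.map_C]
    have : φ (N:ℤ) = 0 := by
      show ((N:ℤ) : ZMod N) = 0
      exact_mod_cast ZMod.natCast_self N
    rw [this, map_zero]
  rw [Ideal.Quotient.eq_zero_iff_mem, Ideal.mem_span_singleton]
  constructor
  · rintro ⟨g', hg'⟩
    obtain ⟨g, rfl⟩ := Polynomial.map_surjective φ ZMod.intCast_surjective g'
    have hz : (P - Q * g).map φ = 0 := by
      rw [Polynomial.map_sub, Polynomial.map_mul, hg']; ring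
    have : C ((N:ℤ)) ∣ (P - Q * g) := by
      rw [Polynomial.C_dvd_iff_dvd_coeff]
      intro i
      have := congrArg (fun p => Polynomial.coeff p i) hz
      simp only [Polynomial.coeff_map, Polynomial.coeff_zero] at this
      exact_mod_cast (ZMod.intCast_zmod_eq_zero_iff_dvd _ N).mp this
    obtain ⟨b, hb⟩ := this
    exact ⟨g, b, by linear_combination hb⟩
  · rintro ⟨a, b, rfl⟩
    refine ⟨a.map φ, ?_⟩
    rw [Polynomial.map_add, Polynomial.map_mul, Polynomial.map_mul, hCN, zero_mul, add_zero]

lemma C_sq (a : ZMod 2) : (C a : Polynomial (ZMod 2)) ^ 2 = C a := by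
  rw [sq, ← Polynomial.C_mul, sq_self]

lemma last_step (s r e : ℕ) (hs : 0 < s) (hsr : s < r) (he0 : 0 < e) (hes : e ≠ s) (her : e < r)
    (Tb Fb : Polynomial (ZMod 2)) (hTb : Tb = 1 + X^s + X^r) (hirr : Irreducible Tb)
    (K1 K2 K3 : ZMod 2)
    (hFb : Fb = C K1 + C K2 * X^(2*s) + C K3 * X^(2*r) + X^(2*e))
    (hdvd : Tb ∣ Fb) : False := by
  set H : Polynomial (ZMod 2) := C K1 + C K2 * X^s + C K3 * X^r + X^e with hH
  have hHH : H * H = Fb := by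
    rw [hFb, hH]
    have h2 := two_eq_zero'
    ring_nf
    rw [h2]
    simp only [mul_zero, zero_mul, add_zero, zero_add, C_sq]
  -- prime
  have hprime : Prime Tb := hirr.prime
  have hdvdH : Tb ∣ H := by
    rcases (hprime.2.2 _ _ (hHH ▸ hdvd)) with h | h <;> exact h
  -- degree facts
  have hTbdeg : Tb.natDegree = r := by
    rw [hTb]
    compute_degree
    any_goals omega
    rw [if_neg (by omega : ¬ r = 0), if_neg (by omega : ¬ r = s)]
    decide
  have hTbne : Tb ≠ 0 := hirr.ne_zero
  have hHcoeff : H.coeff e = 1 := by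
    rw [hH]
    simp [Polynomial.coeff_add, Polynomial.coeff_C_mul, Polynomial.coeff_X_pow,
      Polynomial.coeff_C, he0.ne', hes, her.ne, (fun h => hes h.symm : s ≠ e), (her.ne' : r ≠ e)]
  have hHdeg : H.natDegree ≤ r := by
    rw [hH]
    refine le_trans (Polynomial.natDegree_add_le _ _) ?_
    simp only [sup_le_iff]
    constructor
    · refine le_trans (Polynomial.natDegree_add_le _ _) ?_
      simp only [sup_le_iff]
      constructor
      · refine le_trans (Polynomial.natDegree_add_le _ _) ?_
        simp only [sup_le_iff]
        exact ⟨le_trans (Polynomial.natDegree_C _).le (by omega),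
          le_trans (Polynomial.natDegree_C_mul_X_pow_le _ _) hsr.le⟩
      · exact le_trans (Polynomial.natDegree_C_mul_X_pow_le _ _) le_rfl
    · simp [Polynomial.natDegree_X_pow]
      omega
  obtain ⟨k, hk⟩ := hdvdH
  rcases eq_or_ne k 0 with rfl | hk0
  · rw [mul_zero] at hk
    rw [hk] at hHcoeff
    simp at hHcoeff
  · have hdegk : k.natDegree = 0 := by
      have := Polynomial.natDegree_mul hTbne hk0
      rw [← hk, hTbdeg] at this
      omega
    have hkC : k = C (k.coeff 0) := Polynomial.eq_C_of_natDegree_eq_zero hdegk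
    rw [hkC] at hk
    have : H.coeff e = Tb.coeff e * k.coeff 0 := by
      rw [hk, Polynomial.coeff_mul_C]
    rw [hHcoeff, hTb] at this
    simp [Polynomial.coeff_add, Polynomial.coeff_X_pow, Polynomial.coeff_one,
      he0.ne', hes, her.ne, (fun h => hes h.symm : s ≠ e), (her.ne' : r ≠ e)] at this

lemma not_both_even (s r : ℕ) (hs : 0 < s) (hsr : s < r)
    (Tb : Polynomial (ZMod 2)) (hTb : Tb = 1 + X^s + X^r) (hirr : Irreducible Tb)
    (hse : Even s) (hre : Even r) : False := by
  obtain ⟨i, rfl⟩ := hse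
  obtain ⟨j, rfl⟩ := hre
  have hi : 0 < i := by omega
  have hij : i < j := by omega
  set W : Polynomial (ZMod 2) := 1 + X^i + X^j with hW
  have hWW : Tb = W * W := by
    rw [hTb, hW]
    have h2 := two_eq_zero'
    ring_nf
    rw [h2]
    simp only [mul_zero, zero_mul, add_zero, zero_add, C_sq, one_pow]
  have hdegW : W.natDegree = j := by
    rw [hW]
    compute_degree
    any_goals omega
    rw [if_neg (by omega : ¬ j = 0), if_neg (by omega : ¬ j = i)]
    decide
  rcases hirr.isUnit_or_isUnit hWW with h | h <;>
  · have := Polynomial.natDegree_eq_zero_of_isUnit h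
    omega

lemma even_half {m : ℤ} (h : Even m) : ∃ k, m = 2*k := by
  obtain ⟨k, hk⟩ := h; exact ⟨k, by omega⟩

lemma core (c0 cs cr : ℤ) (s r : ℕ) (hs : 0 < s) (hsr : s < r) (hne : r ≠ 2*s)
    (h0 : Odd c0) (hcs : Odd cs) (hcr : Odd cr)
    (T : Polynomial ℤ) (hT : T = C c0 + C cs * X^s + C cr * X^r)
    (hirr : Irreducible (T.map phi2))
    (n : ℕ) (hn : Odd n)
    (a b : Polynomial ℤ) (heq : (X:Polynomial ℤ)^n = 1 + T * a + 4 * b) : False := by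
  set Tb := T.map phi2 with hTbdef
  have hTb : Tb = 1 + X^s + X^r := by
    rw [hTbdef, hT]
    simp only [Polynomial.map_add, Polynomial.map_mul, Polynomial.map_pow, Polynomial.map_C,
      Polynomial.map_X]
    rw [show phi2 c0 = 1 from odd_cast2 h0, show phi2 cs = 1 from odd_cast2 hcs,
      show phi2 cr = 1 from odd_cast2 hcr]
    simp
  have hTbne : Tb ≠ 0 := hirr.ne_zero
  have hprime : Prime Tb := hirr.prime
  have h2z : (2 : Polynomial (ZMod 2)) = 0 := two_eq_zero'
  have h4z : (4 : Polynomial (ZMod 2)) = 0 := by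
    rw [show (4 : Polynomial (ZMod 2)) = 2*2 by norm_num, h2z]; ring
  have h8z : (8 : Polynomial (ZMod 2)) = 0 := by
    rw [show (8 : Polynomial (ZMod 2)) = 2*4 by norm_num, h2z]; ring
  have h16z : (16 : Polynomial (ZMod 2)) = 0 := by
    rw [show (16 : Polynomial (ZMod 2)) = 2*8 by norm_num, h2z]; ring
  -- mod 2 version of heq
  have hmod : (X:Polynomial (ZMod 2))^n = 1 + Tb * (a.map phi2) := by
    have h' := congrArg (Polynomial.map phi2) heq
    simpa only [Polynomial.map_add, Polynomial.map_mul, Polynomial.map_pow,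
      Polynomial.map_one, Polynomial.map_X, Polynomial.map_ofNat, h4z, zero_mul,
      add_zero] using h'
  have hnota : ¬ Tb ∣ a.map phi2 := by
    rintro ⟨c, hc⟩
    have hncast : ((n:ℕ) : ZMod 2) = 1 := by
      obtain ⟨m, rfl⟩ := hn; push_cast; rw [show (2:ZMod 2) = 0 by decide]; ring
    have hsf : Squarefree ((X:Polynomial (ZMod 2))^n - C 1) :=
      (Polynomial.separable_X_pow_sub_C (1:ZMod 2) (by rw [hncast]; exact one_ne_zero)
        one_ne_zero).squarefree
    have hdd : (Tb*Tb) ∣ ((X:Polynomial (ZMod 2))^n - C 1) := by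
      refine ⟨c, ?_⟩
      rw [map_one]
      rw [hc] at hmod
      linear_combination hmod
    exact hirr.not_isUnit (hsf _ hdd)
  -- signs
  set σ : ℤ := (-1)^r with hσdef
  set τ : ℤ := (-1)^s with hτdef
  have hσo : Odd σ := Odd.pow ⟨-1, by ring⟩
  have hτo : Odd τ := Odd.pow ⟨-1, by ring⟩
  -- even coefficients
  obtain ⟨k1, hk1⟩ := even_half ((hσo.mul (h0.mul h0)).sub_odd h0)
  obtain ⟨k2, hk2⟩ := even_half ((hσo.mul (hcs.mul (hτo.mul hcs))).sub_odd hcs)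
  obtain ⟨k3, hk3⟩ := even_half ((hσo.mul (hcr.mul (hσo.mul hcr))).sub_odd hcr)
  obtain ⟨k4, hk4⟩ := even_half (((h0.mul (hτo.mul hcs)).add_odd (hcs.mul h0)).mul_left σ)
  obtain ⟨k5, hk5⟩ := even_half (((h0.mul (hσo.mul hcr)).add_odd (hcr.mul h0)).mul_left σ)
  obtain ⟨k6, hk6⟩ := even_half (((hcs.mul (hσo.mul hcr)).add_odd (hcr.mul (hτo.mul hcs))).mul_left σ)
  set F : Polynomial ℤ := C k1 + C k2 * X^(2*s) + C k3 * X^(2*r)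
      + C k4 * X^s + C k5 * X^r + C k6 * X^(s+r) with hFdef
  -- comp facts
  have hT2 : T.comp (X^2) = C c0 + C cs * X^(2*s) + C cr * X^(2*r) := by
    rw [hT]
    simp only [Polynomial.add_comp, Polynomial.mul_comp, Polynomial.C_comp,
      Polynomial.pow_comp, Polynomial.X_comp, ← pow_mul]
  have hT' : T.comp (-X) = C c0 + (C τ * C cs) * X^s + (C σ * C cr) * X^r := by
    have hnegpow : ∀ m : ℕ, (-X : Polynomial ℤ)^m = C ((-1:ℤ)^m) * X^m := by
      intro m
      rw [neg_pow, map_pow, map_neg, map_one]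
    rw [hT]
    simp only [Polynomial.add_comp, Polynomial.mul_comp, Polynomial.C_comp,
      Polynomial.pow_comp, Polynomial.X_comp, hnegpow]
    rw [← hτdef, ← hσdef]
    ring
  -- C-pushed evenness
  have hC1 : C σ * (C c0 * C c0) - C c0 = 2 * (C k1 : Polynomial ℤ) := by
    have := congrArg (fun x : ℤ => (C x : Polynomial ℤ)) hk1
    simpa only [Polynomial.C_sub, Polynomial.C_mul, map_ofNat] using this
  have hC2 : C σ * (C cs * (C τ * C cs)) - C cs = 2 * (C k2 : Polynomial ℤ) := by
    have := congrArg (fun x : ℤ => (C x : Polynomial ℤ)) hk2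
    simpa only [Polynomial.C_sub, Polynomial.C_mul, map_ofNat] using this
  have hC3 : C σ * (C cr * (C σ * C cr)) - C cr = 2 * (C k3 : Polynomial ℤ) := by
    have := congrArg (fun x : ℤ => (C x : Polynomial ℤ)) hk3
    simpa only [Polynomial.C_sub, Polynomial.C_mul, map_ofNat] using this
  have hC4 : C σ * (C c0 * (C τ * C cs) + C cs * C c0) = 2 * (C k4 : Polynomial ℤ) := by
    have := congrArg (fun x : ℤ => (C x : Polynomial ℤ)) hk4
    simpa only [Polynomial.C_add, Polynomial.C_mul, map_ofNat] using this
  have hC5 : C σ * (C c0 * (C σ * C cr) + C cr * C c0) = 2 * (C k5 : Polynomial ℤ) := by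
    have := congrArg (fun x : ℤ => (C x : Polynomial ℤ)) hk5
    simpa only [Polynomial.C_add, Polynomial.C_mul, map_ofNat] using this
  have hC6 : C σ * (C cs * (C σ * C cr) + C cr * (C τ * C cs)) = 2 * (C k6 : Polynomial ℤ) := by
    have := congrArg (fun x : ℤ => (C x : Polynomial ℤ)) hk6
    simpa only [Polynomial.C_add, Polynomial.C_mul, map_ofNat] using this
  -- the Graeffe identity
  have ID : T.comp (X^2) = C σ * (T * T.comp (-X)) - 2*F := by
    rw [hT2, hT', hFdef, hT]
    linear_combination (-1 : Polynomial ℤ) * hC1 - X^(2*s)*hC2 - X^(2*r)*hC3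
      - X^s*hC4 - X^r*hC5 - X^(s+r)*hC6
  -- key squaring identity
  have key : (1 + T*a + 4*b)^2
      = 1 + (T.comp (X^2)) * (a.comp (X^2)) + 4*(b.comp (X^2)) := by
    have e1 : ((X:Polynomial ℤ)^n).comp (X^2) = (1 + T*a + 4*b).comp (X^2) :=
      congrArg (fun p : Polynomial ℤ => p.comp (X^2)) heq
    simp only [Polynomial.pow_comp, Polynomial.X_comp, Polynomial.add_comp,
      Polynomial.mul_comp, Polynomial.one_comp, Polynomial.ofNat_comp] at e1
    rw [← pow_mul, mul_comm 2 n, pow_mul] at e1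
    rw [heq] at e1
    exact e1
  set a2 := a.comp (X^2) with ha2
  set b2 := b.comp (X^2) with hb2
  set G : Polynomial ℤ := C σ * (T.comp (-X)) * a2 - 2*a - T*a^2 - 8*(a*b) with hG
  have EQ1 : T * G = 2*(F * a2) + 8*b + 16*b^2 - 4*b2 := by
    rw [hG]
    linear_combination (-1 : Polynomial ℤ) * key - a2 * ID
  -- G maps to zero
  have hG0 : G.map phi2 = 0 := by
    rw [hG]
    simp only [Polynomial.map_sub, Polynomial.map_mul, Polynomial.map_add,
      Polynomial.map_pow, Polynomial.map_C, Polynomial.map_ofNat, h2z, h8z,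
      zero_mul, mul_zero, sub_zero]
    rw [ha2]
    rw [Polynomial.map_comp, Polynomial.map_comp, Polynomial.map_neg, Polynomial.map_X,
      Polynomial.map_pow, Polynomial.map_X]
    rw [show (-X : Polynomial (ZMod 2)) = X by linear_combination (-(X:Polynomial (ZMod 2))) * two_eq_zero']
    rw [Polynomial.comp_X, comp_sq]
    rw [show phi2 σ = 1 from odd_cast2 hσo]
    simp only [Polynomial.C_1]
    ring
  obtain ⟨G', hG'⟩ := dvd2_of_map_eq_zero hG0
  have EQ2 : F * a2 + 4*b + 8*b^2 - 2*b2 = T * G' := by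
    have h2' : (2:Polynomial ℤ) * (F * a2 + 4*b + 8*b^2 - 2*b2) = 2 * (T * G') := by
      linear_combination -EQ1 + T * hG'
    exact mul_left_cancel₀ (by norm_num) h2'
  -- divisibility over F2
  have hFdvd : Tb ∣ F.map phi2 := by
    have h' := congrArg (Polynomial.map phi2) EQ2
    simp only [Polynomial.map_add, Polynomial.map_sub, Polynomial.map_mul,
      Polynomial.map_pow, Polynomial.map_ofNat, h2z, h4z, h8z, zero_mul, mul_zero,
      add_zero, sub_zero] at h'
    rw [ha2, Polynomial.map_comp, Polynomial.map_pow, Polynomial.map_X, comp_sq] at h'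
    have hd : Tb ∣ (F.map phi2) * ((a.map phi2) * (a.map phi2)) := ⟨G'.map phi2, by linear_combination h'⟩
    rcases hprime.2.2 _ _ hd with h | h
    · exact h
    · rcases hprime.2.2 _ _ h with h | h <;> exact absurd h hnota
  -- F mapped explicitly
  have hFmap : F.map phi2 = C ((k1 : ZMod 2)) + C ((k2 : ZMod 2)) * X^(2*s)
      + C ((k3 : ZMod 2)) * X^(2*r) + C ((k4 : ZMod 2)) * X^s
      + C ((k5 : ZMod 2)) * X^r + C ((k6 : ZMod 2)) * X^(s+r) := by
    rw [hFdef]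
    simp only [Polynomial.map_add, Polynomial.map_mul, Polynomial.map_pow,
      Polynomial.map_C, Polynomial.map_X]
    norm_num
  -- now case analysis on parities
  clear EQ1 EQ2 key ID hG0 hG' hG hmod heq hC1 hC2 hC3 hC4 hC5 hC6
  rcases Nat.even_or_odd s with hse | hso <;> rcases Nat.even_or_odd r with hre | hro
  · -- both even: impossible
    exact not_both_even s r hs hsr Tb hTb hirr hse hre
  · -- s even, r odd
    have hσ : σ = -1 := Odd.neg_one_pow hro
    have hτ : τ = 1 := Even.neg_one_pow hse
    simp only [hσ, hτ] at hk4 hk5 hk6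
    have hk5z : k5 = 0 := by
      have : (2:ℤ)*k5 = 2*0 := by linear_combination -hk5
      exact mul_left_cancel₀ (by norm_num) this
    have hk6z : k6 = 0 := by
      have : (2:ℤ)*k6 = 2*0 := by linear_combination -hk6
      exact mul_left_cancel₀ (by norm_num) this
    have hk4v : k4 = -(c0*cs) := by
      have : (2:ℤ)*k4 = 2*(-(c0*cs)) := by linear_combination -hk4
      exact mul_left_cancel₀ (by norm_num) this
    have hK4 : ((k4 : ZMod 2)) = 1 := by
      rw [hk4v]; exact odd_cast2 ((h0.mul hcs).neg)
    obtain ⟨e, hee⟩ := hse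
    have hFb : F.map phi2 = C ((k1 : ZMod 2)) + C ((k2 : ZMod 2)) * X^(2*s)
        + C ((k3 : ZMod 2)) * X^(2*r) + X^(2*e) := by
      rw [hFmap, hK4, hk5z, hk6z, show s = 2*e by omega]
      push_cast
      simp only [Polynomial.C_0, zero_mul, add_zero, Polynomial.C_1, one_mul]
    exact last_step s r e hs hsr (by omega) (by omega) (by omega) Tb (F.map phi2) hTb hirr
      _ _ _ hFb hFdvd
  · -- s odd, r even
    have hσ : σ = 1 := Even.neg_one_pow hre
    have hτ : τ = -1 := Odd.neg_one_pow hso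
    simp only [hσ, hτ] at hk4 hk5 hk6
    have hk4z : k4 = 0 := by
      have : (2:ℤ)*k4 = 2*0 := by linear_combination -hk4
      exact mul_left_cancel₀ (by norm_num) this
    have hk6z : k6 = 0 := by
      have : (2:ℤ)*k6 = 2*0 := by linear_combination -hk6
      exact mul_left_cancel₀ (by norm_num) this
    have hk5v : k5 = c0*cr := by
      have : (2:ℤ)*k5 = 2*(c0*cr) := by linear_combination -hk5
      exact mul_left_cancel₀ (by norm_num) this
    have hK5 : ((k5 : ZMod 2)) = 1 := by
      rw [hk5v]; exact odd_cast2 (h0.mul hcr)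
    obtain ⟨e, hee⟩ := hre
    have hFb : F.map phi2 = C ((k1 : ZMod 2)) + C ((k2 : ZMod 2)) * X^(2*s)
        + C ((k3 : ZMod 2)) * X^(2*r) + X^(2*e) := by
      rw [hFmap, hK5, hk4z, hk6z, show r = 2*e by omega]
      push_cast
      simp only [Polynomial.C_0, zero_mul, add_zero, Polynomial.C_1, one_mul]
    exact last_step s r e hs hsr (by omega) (by omega) (by omega) Tb (F.map phi2) hTb hirr
      _ _ _ hFb hFdvd
  · -- both odd
    have hσ : σ = -1 := Odd.neg_one_pow hro
    have hτ : τ = -1 := Odd.neg_one_pow hso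
    simp only [hσ, hτ] at hk4 hk5 hk6
    have hk4z : k4 = 0 := by
      have : (2:ℤ)*k4 = 2*0 := by linear_combination -hk4
      exact mul_left_cancel₀ (by norm_num) this
    have hk5z : k5 = 0 := by
      have : (2:ℤ)*k5 = 2*0 := by linear_combination -hk5
      exact mul_left_cancel₀ (by norm_num) this
    have hk6v : k6 = cs*cr := by
      have : (2:ℤ)*k6 = 2*(cs*cr) := by linear_combination -hk6
      exact mul_left_cancel₀ (by norm_num) this
    have hK6 : ((k6 : ZMod 2)) = 1 := by
      rw [hk6v]; exact odd_cast2 (hcs.mul hcr)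
    obtain ⟨e, hee⟩ := hso.add_odd hro
    have hFb : F.map phi2 = C ((k1 : ZMod 2)) + C ((k2 : ZMod 2)) * X^(2*s)
        + C ((k3 : ZMod 2)) * X^(2*r) + X^(2*e) := by
      rw [hFmap, hK6, hk4z, hk5z, show s+r = 2*e by omega]
      push_cast
      simp only [Polynomial.C_0, zero_mul, add_zero, Polynomial.C_1, one_mul]
    exact last_step s r e hs hsr (by omega) (by omega) (by omega) Tb (F.map phi2) hTb hirr
      _ _ _ hFb hFdvd

lemma pow_eq_one_iff' (N : ℕ) [NeZero N] (Q : Polynomial ℤ) (m : ℕ) :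
    ((Ideal.Quotient.mk (Ideal.span {Q.map (Int.castRingHom (ZMod N))})
      (X : Polynomial (ZMod N)))^m = 1) ↔
    ∃ a b : Polynomial ℤ, (X:Polynomial ℤ)^m = 1 + Q*a + C ((N:ℕ):ℤ)*b := by
  rw [← sub_eq_zero]
  have hh : (Ideal.Quotient.mk (Ideal.span {Q.map (Int.castRingHom (ZMod N))})
      ((((X:Polynomial ℤ)^m - 1)).map (Int.castRingHom (ZMod N))))
      = (Ideal.Quotient.mk (Ideal.span {Q.map (Int.castRingHom (ZMod N))})
        (X : Polynomial (ZMod N)))^m - 1 := by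
    rw [Polynomial.map_sub, Polynomial.map_pow, Polynomial.map_X, Polynomial.map_one,
      map_sub, map_pow, map_one]
  rw [← hh, transfer]
  constructor
  · rintro ⟨a, b, h⟩; exact ⟨a, b, by linear_combination h⟩
  · rintro ⟨a, b, h⟩; exact ⟨a, b, by linear_combination h⟩

lemma orderOf_dvd_reduction (w : ℕ) (hw : 1 ≤ w) (Q : Polynomial ℤ) :
    orderOf (Ideal.Quotient.mk (Ideal.span {Q.map phi2}) (X : Polynomial (ZMod 2))) ∣
    orderOf (Ideal.Quotient.mk (Ideal.span {Q.map (Int.castRingHom (ZMod (2^w)))})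
      (X : Polynomial (ZMod (2^w)))) := by
  have h2w : (2:ℕ) ∣ 2^w := dvd_pow_self 2 (by omega)
  set ψ : ZMod (2^w) →+* ZMod 2 := ZMod.castHom h2w (ZMod 2) with hψ
  set g : Polynomial (ZMod (2^w)) →+* (Polynomial (ZMod 2) ⧸ Ideal.span {Q.map phi2}) :=
    (Ideal.Quotient.mk (Ideal.span {Q.map phi2})).comp (Polynomial.mapRingHom ψ) with hg
  have hcomp : ψ.comp (Int.castRingHom (ZMod (2^w))) = phi2 := RingHom.ext_int _ _
  have hker : ∀ p ∈ Ideal.span {Q.map (Int.castRingHom (ZMod (2^w)))}, g p = 0 := by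
    intro p hp
    rw [Ideal.mem_span_singleton'] at hp
    obtain ⟨c, hc⟩ := hp
    rw [← hc, map_mul]
    have : g (Q.map (Int.castRingHom (ZMod (2^w)))) = 0 := by
      rw [hg]
      simp only [RingHom.comp_apply, Polynomial.coe_mapRingHom]
      rw [Polynomial.map_map, hcomp]
      rw [Ideal.Quotient.eq_zero_iff_mem]
      exact Ideal.subset_span (Set.mem_singleton _)
    rw [this, mul_zero]
  set ρ := Ideal.Quotient.lift _ g hker with hρ
  have hx : ρ (Ideal.Quotient.mk (Ideal.span {Q.map (Int.castRingHom (ZMod (2^w)))})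
      (X : Polynomial (ZMod (2^w)))) = Ideal.Quotient.mk (Ideal.span {Q.map phi2})
      (X : Polynomial (ZMod 2)) := by
    rw [hρ, Ideal.Quotient.lift_mk, hg]
    simp only [RingHom.comp_apply, Polynomial.coe_mapRingHom, Polynomial.map_X]
  calc orderOf (Ideal.Quotient.mk (Ideal.span {Q.map phi2}) (X : Polynomial (ZMod 2)))
      = orderOf (ρ.toMonoidHom (Ideal.Quotient.mk _ (X : Polynomial (ZMod (2^w))))) := by
        rw [show ρ.toMonoidHom (Ideal.Quotient.mk _ (X : Polynomial (ZMod (2^w)))) =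
          ρ (Ideal.Quotient.mk _ (X : Polynomial (ZMod (2^w)))) from rfl, hx]
    _ ∣ _ := orderOf_map_dvd _ _

theorem stmt17 (q0 qs qr : ℤ) (s r : ℕ) (hs : 0 < s) (hsr : s < r) (hne : r ≠ 2 * s)
    (h0 : Odd q0) (hqs : Odd qs) (hqr : Odd qr)
    (Q : Polynomial ℤ) (hQ : Q = C q0 + C qs * X ^ s + C qr * X ^ r)
    (hirr : Irreducible (Q.map (Int.castRingHom (ZMod 2))))
    (lam : ℕ)
    (hlam : lam = orderOf (Ideal.Quotient.mk
      (Ideal.span {Q.map (Int.castRingHom (ZMod 2))}) (X : Polynomial (ZMod 2)))) :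
    ∀ w : ℕ, 1 ≤ w →
      orderOf (Ideal.Quotient.mk
          (Ideal.span {Q.map (Int.castRingHom (ZMod (2 ^ w)))})
          (X : Polynomial (ZMod (2 ^ w)))) = 2 ^ (w - 1) * lam := by
  -- general facts independent of w
  have hQb : Q.map phi2 = 1 + X^s + X^r := by
    rw [hQ]
    simp only [Polynomial.map_add, Polynomial.map_mul, Polynomial.map_pow, Polynomial.map_C,
      Polynomial.map_X]
    rw [show phi2 q0 = 1 from odd_cast2 h0, show phi2 qs = 1 from odd_cast2 hqs,
      show phi2 qr = 1 from odd_cast2 hqr]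
    simp
  have hQbne : Q.map phi2 ≠ 0 := hirr.ne_zero
  have hQbprime : Prime (Q.map phi2) := hirr.prime
  have hdegQb : (Q.map phi2).natDegree = r := by
    rw [hQb]
    compute_degree
    any_goals omega
    rw [if_neg (by omega : ¬ r = 0), if_neg (by omega : ¬ r = s)]
    decide
  -- lam facts
  have hx2pow : (Ideal.Quotient.mk (Ideal.span {Q.map phi2}) (X : Polynomial (ZMod 2)))^lam
      = 1 := by rw [hlam]; exact pow_orderOf_eq_one _
  have hlampos : 0 < lam := by
    letI : (Ideal.span {Q.map phi2}).IsMaximal :=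
      PrincipalIdealRing.isMaximal_of_irreducible hirr
    letI : Field (Polynomial (ZMod 2) ⧸ Ideal.span {Q.map phi2}) :=
      Ideal.Quotient.field _
    have hfin : Finite (Polynomial (ZMod 2) ⧸ Ideal.span {Q.map phi2}) := by
      have pb := AdjoinRoot.powerBasis (show Q.map phi2 ≠ 0 from hQbne)
      exact (Module.fintypeOfFintype pb.basis).finite
    have hx2ne : (Ideal.Quotient.mk (Ideal.span {Q.map phi2}) (X : Polynomial (ZMod 2))) ≠ 0 := by
      intro h
      rw [Ideal.Quotient.eq_zero_iff_mem, Ideal.mem_span_singleton] at h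
      have := Polynomial.natDegree_le_of_dvd h Polynomial.X_ne_zero
      rw [hdegQb, Polynomial.natDegree_X] at this
      omega
    have hou : orderOf ((Ideal.Quotient.mk (Ideal.span {Q.map phi2}) (X : Polynomial (ZMod 2))))
        = orderOf (Units.mk0 _ hx2ne) := by
      rw [← orderOf_units, Units.val_mk0]
    rw [hlam, hou]
    exact orderOf_pos _
  have hlamodd : Odd lam := by
    letI : (Ideal.span {Q.map phi2}).IsMaximal :=
      PrincipalIdealRing.isMaximal_of_irreducible hirr
    letI : Field (Polynomial (ZMod 2) ⧸ Ideal.span {Q.map phi2}) :=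
      Ideal.Quotient.field _
    rw [Nat.odd_iff, ← Nat.not_even_iff]
    intro hev
    obtain ⟨m, hm⟩ := hev
    have hmpos : 0 < m := by omega
    set y := (Ideal.Quotient.mk (Ideal.span {Q.map phi2}) (X : Polynomial (ZMod 2)))^m with hy
    have hy2 : y^2 = 1 := by
      rw [hy, ← pow_mul]
      rw [show m*2 = lam by omega]
      exact hx2pow
    have h2R : (2 : Polynomial (ZMod 2) ⧸ Ideal.span {Q.map phi2}) = 0 := by
      rw [← map_ofNat (Ideal.Quotient.mk (Ideal.span {Q.map phi2})) 2, two_eq_zero', map_zero]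
    have hsq : (y - 1)^2 = 0 := by linear_combination hy2 + (1 - y) * h2R
    have hy1 : y = 1 := by
      have := (pow_eq_zero_iff (two_ne_zero)).mp hsq
      linear_combination this
    have : lam ∣ m := by
      rw [hlam]
      exact orderOf_dvd_of_pow_eq_one hy1
    have := Nat.le_of_dvd hmpos this
    omega
  -- base representation mod 2
  obtain ⟨a0, u0, hbase⟩ : ∃ a b : Polynomial ℤ, (X:Polynomial ℤ)^lam = 1 + Q*a + 2*b := by
    obtain ⟨a, b, h⟩ := (pow_eq_one_iff' 2 Q lam).mp hx2pow
    exact ⟨a, b, by rw [show (C ((2:ℕ):ℤ) : Polynomial ℤ) = 2 by push_cast; exact map_ofNat C 2] at h; exact h⟩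
  -- core applications
  have hcoreQ : ∀ a b : Polynomial ℤ, (X:Polynomial ℤ)^lam = 1 + Q*a + 4*b → False :=
    fun a b h => core q0 qs qr s r hs hsr hne h0 hqs hqr Q hQ hirr lam hlamodd a b h
  have hcoreQn : ∀ a b : Polynomial ℤ, (X:Polynomial ℤ)^lam = 1 + (Q.comp (-X))*a + 4*b → False := by
    have hnegpow : ∀ m : ℕ, (-X : Polynomial ℤ)^m = C ((-1:ℤ)^m) * X^m := by
      intro m; rw [neg_pow, map_pow, map_neg, map_one]
    have hQn : Q.comp (-X) = C q0 + C ((-1:ℤ)^s*qs) * X^s + C ((-1:ℤ)^r*qr) * X^r := by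
      rw [hQ]
      simp only [Polynomial.add_comp, Polynomial.mul_comp, Polynomial.C_comp,
        Polynomial.pow_comp, Polynomial.X_comp, hnegpow, Polynomial.C_mul]
      ring
    have hirrn : Irreducible ((Q.comp (-X)).map phi2) := by
      have : (Q.comp (-X)).map phi2 = Q.map phi2 := by
        rw [Polynomial.map_comp, Polynomial.map_neg, Polynomial.map_X]
        rw [show (-X : Polynomial (ZMod 2)) = X by
          linear_combination (-(X:Polynomial (ZMod 2))) * two_eq_zero']
        rw [Polynomial.comp_X]
      rw [this]; exact hirr
    exact fun a b h => core q0 ((-1:ℤ)^s*qs) ((-1:ℤ)^r*qr) s r hs hsr hne h0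
      ((Odd.pow ⟨-1, by ring⟩).mul hqs) ((Odd.pow ⟨-1, by ring⟩).mul hqr)
      (Q.comp (-X)) hQn hirrn lam hlamodd a b h
  -- u0 is not 0 or 1 mod (2, Q)
  have hu0 : ¬ (Q.map phi2) ∣ (u0.map phi2) := by
    rintro ⟨c, hc⟩
    obtain ⟨c', rfl⟩ := Polynomial.map_surjective phi2 ZMod.intCast_surjective c
    have hz : (u0 - Q*c').map phi2 = 0 := by
      rw [Polynomial.map_sub, Polynomial.map_mul, hc]; ring
    obtain ⟨d, hd⟩ := dvd2_of_map_eq_zero hz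
    exact hcoreQ (a0 + 2*c') d (by linear_combination hbase + 2*hd)
  have hu1 : ¬ (Q.map phi2) ∣ ((u0 - 1).map phi2) := by
    rintro ⟨c, hc⟩
    obtain ⟨c', rfl⟩ := Polynomial.map_surjective phi2 ZMod.intCast_surjective c
    have hz : (u0 - 1 - Q*c').map phi2 = 0 := by
      rw [Polynomial.map_sub, Polynomial.map_mul, hc]; ring
    obtain ⟨d, hd⟩ := dvd2_of_map_eq_zero hz
    -- X^lam = -1 + Q*(a0+2c') + 4*(d+1)
    have hE : (X:Polynomial ℤ)^lam = -1 + Q*(a0 + 2*c') + 4*(d+1) := by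
      linear_combination hbase + 2*hd
    have hEc := congrArg (fun p : Polynomial ℤ => p.comp (-X)) hE
    simp only [Polynomial.add_comp, Polynomial.mul_comp, Polynomial.neg_comp,
      Polynomial.one_comp, Polynomial.ofNat_comp, Polynomial.pow_comp,
      Polynomial.X_comp] at hEc
    rw [show ((-X : Polynomial ℤ))^lam = -(X^lam) by
      rw [neg_pow, hlamodd.neg_one_pow]; ring] at hEc
    exact hcoreQn (-(a0.comp (-X) + 2*(c'.comp (-X)))) (-(d.comp (-X) + 1))
      (by linear_combination -hEc)
  -- the invariant
  have INV : ∀ k, 1 ≤ k → ∃ u a b : Polynomial ℤ,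
      (X:Polynomial ℤ)^(2^k*lam) = 1 + 2^(k+1)*u + Q*a + 2^(k+2)*b ∧
      ¬ (Q.map phi2) ∣ (u.map phi2) := by
    intro k hk
    induction k, hk using Nat.le_induction with
    | base =>
      refine ⟨u0 + u0^2, 2*a0 + 4*(u0*a0) + Q*a0^2, 0, ?_, ?_⟩
      · rw [show 2^1*lam = lam*2 by ring, pow_mul]
        linear_combination ((X:Polynomial ℤ)^lam + 1 + Q*a0 + 2*u0) * hbase
      · intro hdvd
        have hsplit : (u0 + u0^2).map phi2 = (u0.map phi2) * ((u0.map phi2) + 1) := by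
          rw [Polynomial.map_add, Polynomial.map_pow]; ring
        rw [hsplit] at hdvd
        rcases hQbprime.2.2 _ _ hdvd with h | h
        · exact hu0 h
        · refine hu1 ?_
          rw [Polynomial.map_sub, Polynomial.map_one]
          rw [show (u0.map phi2) - 1 = (u0.map phi2) + 1 by linear_combination -two_eq_zero']
          exact h
    | succ k hk ih =>
      obtain ⟨u, a, b, hy, hu⟩ := ih
      obtain ⟨j, rfl⟩ : ∃ j, k = j + 1 := ⟨k - 1, by omega⟩
      refine ⟨u, 2*a + 2^(j+3)*(u*a) + 2^(j+4)*(b*a) + Q*a^2,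
        b + 2^j*u^2 + 2^(j+2)*(u*b + b^2), ?_, hu⟩
      rw [show 2^(j+1+1)*lam = (2^(j+1)*lam)*2 by ring, pow_mul]
      linear_combination ((X:Polynomial ℤ)^(2^(j+1)*lam) + 1 + 2^(j+2)*u + Q*a + 2^(j+3)*b) * hy
  -- now fix w
  intro w hw
  haveI : NeZero (2^w) := ⟨by positivity⟩
  have hCN : (C (((2^w:ℕ)):ℤ) : Polynomial ℤ) = 2^w := by
    push_cast
    rw [map_pow, map_ofNat]
  set N := orderOf (Ideal.Quotient.mk
      (Ideal.span {Q.map (Int.castRingHom (ZMod (2 ^ w)))})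
      (X : Polynomial (ZMod (2 ^ w)))) with hN
  -- upper bound
  have UB : ∀ k : ℕ, ∃ a b : Polynomial ℤ,
      (X:Polynomial ℤ)^(2^k*lam) = 1 + Q*a + 2^(k+1)*b := by
    intro k
    induction k with
    | zero => exact ⟨a0, u0, by rw [pow_zero, one_mul]; rw [pow_one]; exact hbase⟩
    | succ k ih =>
      obtain ⟨a, b, h⟩ := ih
      refine ⟨2*a + Q*a^2 + 2^(k+2)*(a*b), b + 2^k*b^2, ?_⟩
      rw [show 2^(k+1)*lam = (2^k*lam)*2 by ring, pow_mul]
      linear_combination ((X:Polynomial ℤ)^(2^k*lam) + 1 + Q*a + 2^(k+1)*b) * h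
  have hdvd1 : N ∣ 2^(w-1)*lam := by
    obtain ⟨a, b, h⟩ := UB (w-1)
    rw [show w-1+1 = w by omega] at h
    exact orderOf_dvd_of_pow_eq_one ((pow_eq_one_iff' (2^w) Q (2^(w-1)*lam)).mpr
      ⟨a, b, by rw [hCN]; exact h⟩)
  have hdvd2 : lam ∣ N := hlam ▸ orderOf_dvd_reduction w hw Q
  rcases eq_or_lt_of_le hw with hw1 | hw2
  · -- w = 1
    have : N ∣ lam := by
      have := hdvd1
      rw [show w - 1 = 0 by omega, pow_zero, one_mul] at this
      exact this
    rw [show w - 1 = 0 by omega, pow_zero, one_mul]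
    exact Nat.dvd_antisymm this hdvd2
  · -- w ≥ 2
    have hw2' : 2 ≤ w := hw2
    have hnd : ¬ N ∣ 2^(w-2)*lam := by
      intro hnd
      have hx1 : (Ideal.Quotient.mk (Ideal.span {Q.map (Int.castRingHom (ZMod (2 ^ w)))})
          (X : Polynomial (ZMod (2 ^ w))))^(2^(w-2)*lam) = 1 :=
        orderOf_dvd_iff_pow_eq_one.mp (hN ▸ hnd)
      obtain ⟨a', b', hE⟩ := (pow_eq_one_iff' (2^w) Q (2^(w-2)*lam)).mp hx1
      rw [hCN] at hE
      rcases eq_or_lt_of_le hw2' with hw2e | hw3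
      · -- w = 2
        rw [show w-2 = 0 by omega, pow_zero, one_mul] at hE
        rw [show ((2:Polynomial ℤ))^w = 4 by rw [← hw2e]; norm_num] at hE
        exact hcoreQ a' b' hE
      · -- w ≥ 3
        obtain ⟨u, a, b, hy, hu⟩ := INV (w-2) (by omega)
        rw [show ((2:Polynomial ℤ))^w = 2^(w-2+2) by rw [show w-2+2 = w by omega]] at hE
        have hcomb : (2:Polynomial ℤ)^(w-2+1) * (u + 2*(b - b')) = Q * (a' - a) := by
          linear_combination hE - hy
        have := div2_lemma hQbne (w-2+1) _ _ hcomb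
        have hmap : (u + 2*(b - b')).map phi2 = u.map phi2 := by
          rw [Polynomial.map_add, Polynomial.map_mul, Polynomial.map_ofNat, two_eq_zero']
          ring
        rw [hmap] at this
        exact hu this
    -- conclude
    obtain ⟨d, hd⟩ := hdvd2
    have hdd : d ∣ 2^(w-1) := by
      have h' : N ∣ lam * 2^(w-1) := by rw [mul_comm]; exact hdvd1
      rw [hd] at h'
      exact (Nat.mul_dvd_mul_iff_left hlampos).mp h' 
    obtain ⟨j, hj, hdj⟩ := (Nat.dvd_prime_pow Nat.prime_two).mp hdd
    rcases eq_or_lt_of_le hj with hje | hjl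
    · rw [hd, hdj, hje]; ring
    · exfalso
      apply hnd
      rw [hd, hdj]
      have : (2:ℕ)^j ∣ 2^(w-2) := pow_dvd_pow 2 (by omega)
      have h2 := mul_dvd_mul_left lam this
      rwa [mul_comm lam (2^(w-2))] at h2
end
end
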